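/- arXiv:1904.04582 — 5 statements merged into one kernel-verified Lean document; each statement's English description precedes it below -/
import Mathlib

section
/- Let Q be a monic irreducible polynomial in F_q[t] and k a positive integer. Then (1/phi(Q)) * sum over nontrivial Dirichlet characters chi mod Q of L^{(k)}(1/2, chi) equals -((-log q)^k / (q^{1/2}-1)) * (deg Q)^k / |Q|^{1/2} + O_k((log q)^k (deg Q)^{k-1} / |Q|^{1/2}) as deg Q -> infinity. -/
/-!
Both `L(s, χ)` and the family of characters are finite, so the average is computed exactly.
For monic `A` with `deg A < deg Q` the class of `A` is a unit, and it is `1` only for `A = 1`,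
whose contribution `(-log 1)^k` vanishes. Orthogonality therefore turns the sum over the
nontrivial characters into `-∑_A (-deg A · log q)^k q^(-deg A / 2)`; as there are `q^n` monic
polynomials of degree `n`, the average is `-(-log q)^k S / (x^(2D) - 1)` with `x = √q`,
`D = deg Q` and `S = ∑_{n<D} n^k x^n`.
Writing `n^k = D^k - (D^k - n^k)`, the geometric series `D^k ∑_{n<D} x^n` cancels the main term
up to `D^k / ((x - 1) x^D (x^D + 1))`, and the rest is `O(k D^(k-1) / x^D)` because
`D^k - n^k ≤ k D^(k-1) (D - n)` and `∑_{n<D} (D - n) x^n ≤ x^(D+1) / (x - 1)^2`.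
The constants are uniform in `q` because `x ≥ √2`.
-/

open Polynomial Finset

lemma sum_range_sub_mul_pow_le {x : ℝ} (hx : 1 < x) (D : ℕ) :
    ∑ n ∈ range D, ((D : ℝ) - n) * x ^ n ≤ x ^ (D + 1) / (x - 1) ^ 2 := by
  have hx0 : 0 < x - 1 := sub_pos.mpr hx
  induction D with
  | zero => simp only [range_zero, sum_empty]; positivity
  | succ D ih =>
    have hsplit : ∑ n ∈ range (D + 1), ((↑(D + 1) : ℝ) - n) * x ^ n
        = ∑ n ∈ range D, ((D : ℝ) - n) * x ^ n + ∑ n ∈ range (D + 1), x ^ n := by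
      rw [sum_range_succ, sum_range_succ (fun n => x ^ n), ← add_assoc, ← sum_add_distrib]
      push_cast
      congr 1
      · exact sum_congr rfl fun n _ => by ring
      · ring
    have hgeom : ∑ n ∈ range (D + 1), x ^ n ≤ x ^ (D + 1) / (x - 1) := by
      rw [geom_sum_eq hx.ne', div_le_div_iff_of_pos_right hx0]
      linarith
    calc _ = _ := hsplit
      _ ≤ x ^ (D + 1) / (x - 1) ^ 2 + x ^ (D + 1) / (x - 1) := add_le_add ih hgeom
      _ = x ^ (D + 1 + 1) / (x - 1) ^ 2 := by field_simp; ring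

lemma sum_range_pow_sub_pow_mul_pow_le {x : ℝ} (hx : 1 < x) (k D : ℕ) :
    ∑ n ∈ range D, ((D : ℝ) ^ k - (n : ℝ) ^ k) * x ^ n
      ≤ k * (D : ℝ) ^ (k - 1) * (x ^ (D + 1) / (x - 1) ^ 2) := by
  calc _ ≤ ∑ n ∈ range D, k * (D : ℝ) ^ (k - 1) * (((D : ℝ) - n) * x ^ n) := by
        refine sum_le_sum fun n hn => ?_
        have hnD : (n : ℝ) ≤ D := by exact_mod_cast (mem_range.mp hn).le
        have hmvt := (le_abs_self _).trans (abs_pow_sub_pow_le (D : ℝ) n k)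
        rw [abs_of_nonneg (sub_nonneg.mpr hnD), Nat.abs_cast, Nat.abs_cast,
          max_eq_left hnD] at hmvt
        rw [← mul_assoc]
        exact mul_le_mul_of_nonneg_right (by linarith) (by positivity)
    _ = k * (D : ℝ) ^ (k - 1) * ∑ n ∈ range D, ((D : ℝ) - n) * x ^ n := (mul_sum ..).symm
    _ ≤ _ := by gcongr; exact sum_range_sub_mul_pow_le hx D

lemma pow_div_sub_sum_div_eq {x : ℝ} (hx : 1 < x) (k : ℕ) {D : ℕ} (hD : 0 < D) :
    (D : ℝ) ^ k / ((x - 1) * x ^ D) - (∑ n ∈ range D, (n : ℝ) ^ k * x ^ n) / (x ^ (2 * D) - 1)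
      = (D : ℝ) ^ k / ((x - 1) * x ^ D * (x ^ D + 1))
        + (∑ n ∈ range D, ((D : ℝ) ^ k - (n : ℝ) ^ k) * x ^ n) / (x ^ (2 * D) - 1) := by
  have hgeom := geom_sum_mul x D
  have hsplit : ∑ n ∈ range D, (n : ℝ) ^ k * x ^ n
      = (D : ℝ) ^ k * ∑ n ∈ range D, x ^ n
        - ∑ n ∈ range D, ((D : ℝ) ^ k - (n : ℝ) ^ k) * x ^ n := by
    rw [mul_sum, ← sum_sub_distrib]
    exact sum_congr rfl fun n _ => by ring
  have ht : 1 < x ^ D := one_lt_pow₀ hx hD.ne'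
  have h2D : x ^ (2 * D) = (x ^ D) ^ 2 := by rw [mul_comm, pow_mul]
  have hx1 : x - 1 ≠ 0 := (sub_pos.mpr hx).ne'
  rw [hsplit, h2D]
  generalize x ^ D = t at *
  generalize ∑ n ∈ range D, x ^ n = g at *
  have ht1 : t + 1 ≠ 0 := by linarith
  have ht0 : t ≠ 0 := by linarith
  have hphi : t ^ 2 - 1 ≠ 0 := by nlinarith
  field_simp
  linear_combination (-(D : ℝ) ^ k * (t + t ^ 2)) * hgeom

theorem abs_pow_div_sub_sum_div_le {x : ℝ} (hx : √2 ≤ x) (k : ℕ) {D : ℕ} (hD : 0 < D) :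
    |(D : ℝ) ^ k / ((x - 1) * x ^ D) - (∑ n ∈ range D, (n : ℝ) ^ k * x ^ n) / (x ^ (2 * D) - 1)|
      ≤ (10 + 20 * k) * (D : ℝ) ^ (k - 1) / x ^ D := by
  have hx1 : 1 < x := Real.one_lt_sqrt_two.trans_le hx
  have hx2 : 2 ≤ x ^ 2 := by simpa using pow_le_pow_left₀ (Real.sqrt_nonneg 2) hx 2
  have hx10 : x ≤ 10 * (x - 1) ^ 2 := by nlinarith
  have hW := sum_range_pow_sub_pow_mul_pow_le hx1 k D
  have hW0 : 0 ≤ ∑ n ∈ range D, ((D : ℝ) ^ k - (n : ℝ) ^ k) * x ^ n :=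
    sum_nonneg fun n hn => mul_nonneg (sub_nonneg.mpr (pow_le_pow_left₀ (Nat.cast_nonneg n)
      (by exact_mod_cast (mem_range.mp hn).le) k)) (by positivity)
  have hDk : (D : ℝ) ^ k ≤ (D : ℝ) ^ (k - 1) * D := by
    rcases k with _ | k
    · simpa using Nat.one_le_iff_ne_zero.mpr hD.ne'
    · rw [Nat.add_sub_cancel, pow_succ]
  have hbern : (D : ℝ) * (x - 1) ≤ x ^ D - 1 := by
    linarith [one_add_mul_sub_le_pow (by linarith : (-1 : ℝ) ≤ x) D]
  have htx : x ≤ x ^ D := le_self_pow₀ hx1.le hD.ne'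
  rw [pow_succ] at hW
  rw [pow_div_sub_sum_div_eq hx1 k hD, pow_mul']
  set t := x ^ D
  set W := ∑ n ∈ range D, ((D : ℝ) ^ k - (n : ℝ) ^ k) * x ^ n
  set E := (D : ℝ) ^ (k - 1)
  have ht2 : 2 ≤ t ^ 2 := hx2.trans (pow_le_pow_left₀ (by linarith) htx 2)
  have hfirst : (D : ℝ) ^ k / ((x - 1) * t * (t + 1)) ≤ 10 * E / t := by
    have hD10 : (D : ℝ) ≤ 10 * (x - 1) * (t + 1) := by nlinarith
    rw [div_le_div_iff₀ (by positivity) (by positivity)]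
    calc (D : ℝ) ^ k * t ≤ E * D * t := by gcongr
      _ ≤ E * (10 * (x - 1) * (t + 1)) * t := by gcongr
      _ = 10 * E * ((x - 1) * t * (t + 1)) := by ring
  have hsecond : W / (t ^ 2 - 1) ≤ 20 * k * E / t := by
    have hW10 : W ≤ 10 * k * E * t := by
      calc W ≤ k * E * (t * x / (x - 1) ^ 2) := hW
        _ ≤ k * E * (t * 10) := by
          gcongr
          rw [div_le_iff₀ (by nlinarith)]
          nlinarith
        _ = 10 * k * E * t := by ring
    rw [div_le_div_iff₀ (by linarith) (by positivity)]
    calc W * t ≤ 10 * k * E * t * t := by gcongr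
      _ ≤ 20 * k * E * (t ^ 2 - 1) := by nlinarith
  rw [abs_of_nonneg (add_nonneg (by positivity) (div_nonneg hW0 (by linarith)))]
  calc _ ≤ 10 * E / t + 20 * k * E / t := add_le_add hfirst hsecond
    _ = (10 + 20 * k) * E / t := by ring

theorem Real.sqrt_pow {x : ℝ} (hx : 0 ≤ x) (n : ℕ) : √(x ^ n) = √x ^ n := by
  rw [← Real.sqrt_sq (pow_nonneg (Real.sqrt_nonneg x) n), ← pow_mul, mul_comm, pow_mul,
    Real.sq_sqrt hx]

theorem iteratedDeriv_const_cpow_neg {w : ℂ} (hw : w ≠ 0) (k : ℕ) :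
    iteratedDeriv k (fun s : ℂ => w ^ (-s)) = fun s => (-Complex.log w) ^ k * w ^ (-s) := by
  have hexp : (fun s : ℂ => w ^ (-s)) = fun s => Complex.exp (-Complex.log w * s) := by
    funext s
    rw [Complex.cpow_def_of_ne_zero hw, neg_mul_comm]
  rw [hexp, iteratedDeriv_cexp_const_mul]
  funext s
  rw [Complex.cpow_def_of_ne_zero hw, mul_neg, neg_mul]

theorem iteratedDeriv_sum_mul_cpow_neg {ι : Type*} (s : Finset ι) (c w : ι → ℂ)
    (hw : ∀ i ∈ s, w i ≠ 0) (k : ℕ) (z : ℂ) :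
    iteratedDeriv k (fun z : ℂ => ∑ i ∈ s, c i * w i ^ (-z)) z
      = ∑ i ∈ s, c i * ((-Complex.log (w i)) ^ k * w i ^ (-z)) := by
  rw [iteratedDeriv_fun_sum fun i hi =>
    ((differentiable_neg.const_cpow (.inl (hw i hi))).const_mul (c i)).contDiff.contDiffAt]
  refine sum_congr rfl fun i hi => ?_
  rw [iteratedDeriv_const_mul_field, iteratedDeriv_const_cpow_neg (hw i hi)]

theorem pow_mul_neg_log_pow_mul_cpow_neg_half {q : ℕ} (hq : q ≠ 0) (k n : ℕ) :
    (q : ℂ) ^ n * ((-Complex.log ((q : ℂ) ^ (n : ℂ))) ^ k * ((q : ℂ) ^ (n : ℂ)) ^ (-(1 / 2) : ℂ))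
      = (((-Real.log q) ^ k * ((n : ℝ) ^ k * √q ^ n) : ℝ) : ℂ) := by
  have hpos : (0 : ℝ) < (q : ℝ) ^ n := by positivity
  have hqn : (q : ℂ) ^ (n : ℂ) = (((q : ℝ) ^ n : ℝ) : ℂ) := by
    push_cast
    exact Complex.cpow_natCast _ _
  have hreal : (q : ℝ) ^ n * ((-Real.log ((q : ℝ) ^ n)) ^ k * ((q : ℝ) ^ n) ^ (-(1 / 2) : ℝ))
      = (-Real.log q) ^ k * ((n : ℝ) ^ k * √q ^ n) := by
    have hsq : (q : ℝ) ^ n = √q ^ n * √q ^ n := by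
      rw [← mul_pow, Real.mul_self_sqrt (Nat.cast_nonneg q)]
    have hsqn : √q ^ n ≠ 0 := by positivity
    rw [Real.log_pow, Real.rpow_neg hpos.le, ← Real.sqrt_eq_rpow,
      Real.sqrt_pow (Nat.cast_nonneg q), hsq]
    field_simp
    ring
  rw [hqn, ← Complex.ofReal_log hpos.le,
    show (-(1 / 2) : ℂ) = ((-(1 / 2) : ℝ) : ℂ) by push_cast; ring,
    ← Complex.ofReal_cpow hpos.le, ← hreal]
  push_cast
  ring

namespace MulChar

variable {M R : Type*} [CommMonoid M] [Finite M] [CommRing R] [IsDomain R]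
  [HasEnoughRootsOfUnity R (Monoid.exponent Mˣ)] [Fintype (MulChar M R)]

theorem sum_apply_eq_zero_of_ne_one {a : M} (ha : a ≠ 1) : ∑ χ : MulChar M R, χ a = 0 := by
  obtain ⟨χ, hχ⟩ := exists_apply_ne_one_of_hasEnoughRootsOfUnity M R ha
  refine eq_zero_of_mul_eq_self_left hχ ?_
  simp only [mul_sum, ← mul_apply]
  exact Fintype.sum_bijective _ (Group.mulLeft_bijective χ) _ _ fun _ ↦ rfl

theorem sum_erase_one_apply_eq_neg_one [DecidableEq (MulChar M R)] {a : M} (ha : IsUnit a)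
    (ha1 : a ≠ 1) : ∑ χ ∈ univ.erase (1 : MulChar M R), χ a = -1 := by
  rw [sum_erase_eq_sub (mem_univ 1), sum_apply_eq_zero_of_ne_one ha1, one_apply ha, zero_sub]

end MulChar

namespace Polynomial

def monicNatDegreeLTEquiv {R : Type*} [Semiring R] (D : ℕ) :
    {A : R[X] // A.Monic ∧ A.natDegree < D}
      ≃ Σ n : Fin D, {A : R[X] // A.Monic ∧ A.natDegree = n} where
  toFun A := ⟨⟨A.1.natDegree, A.2.2⟩, A.1, A.2.1, rfl⟩
  invFun A := ⟨A.2.1, A.2.2.1, by rw [A.2.2.2]; exact A.1.2⟩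
  left_inv _ := rfl
  right_inv A := Sigma.subtype_ext (Fin.ext A.2.2.2) rfl

section Quotient

variable {R : Type*} [CommRing R] {Q A : R[X]}

theorem quotient_mk_ne_zero_of_natDegree_lt (hQ : Q.Monic) (hA : A ≠ 0)
    (hAQ : A.natDegree < Q.natDegree) : Ideal.Quotient.mk (Ideal.span {Q}) A ≠ 0 := by
  rw [Ne, Ideal.Quotient.eq_zero_iff_mem, Ideal.mem_span_singleton]
  exact hQ.not_dvd_of_natDegree_lt hA hAQ

theorem quotient_mk_ne_one_of_natDegree_lt (hQ : Q.Monic) (hA : A.natDegree ≠ 0)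
    (hAQ : A.natDegree < Q.natDegree) : Ideal.Quotient.mk (Ideal.span {Q}) A ≠ 1 := by
  rw [Ne, ← sub_eq_zero, ← map_one (Ideal.Quotient.mk _), ← map_sub]
  refine quotient_mk_ne_zero_of_natDegree_lt hQ
    (sub_ne_zero.mpr fun h => hA (by rw [h, natDegree_one])) ?_
  rwa [← C_1, natDegree_sub_C]

end Quotient

variable {F : Type*} [Field F] [Fintype F]

theorem natCard_monic_natDegree_eq (n : ℕ) :
    Nat.card {A : F[X] // A.Monic ∧ A.natDegree = n} = Fintype.card F ^ n := by
  rw [Nat.card_congr ((monicEquivDegreeLT n).trans (degreeLTEquiv F n).toEquiv), Nat.card_fun,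
    Nat.card_eq_fintype_card, Nat.card_fin]

noncomputable instance (n : ℕ) : Fintype {A : F[X] // A.Monic ∧ A.natDegree = n} :=
  have : Finite {A : F[X] // A.Monic ∧ A.natDegree = n} :=
    .of_equiv _ ((monicEquivDegreeLT n).trans (degreeLTEquiv F n).toEquiv).symm
  .ofFinite _

noncomputable instance (D : ℕ) : Fintype {A : F[X] // A.Monic ∧ A.natDegree < D} :=
  .ofEquiv _ (monicNatDegreeLTEquiv D).symm

theorem sum_monic_natDegree_lt {M : Type*} [AddCommMonoid M] (D : ℕ) (f : ℕ → M) :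
    ∑ A : {A : F[X] // A.Monic ∧ A.natDegree < D}, f A.1.natDegree
      = ∑ n ∈ range D, Fintype.card F ^ n • f n := by
  rw [← (monicNatDegreeLTEquiv D).symm.sum_comp, Fintype.sum_sigma, ← Fin.sum_univ_eq_sum_range]
  refine sum_congr rfl fun n _ => ?_
  rw [sum_congr rfl fun A _ => congrArg f A.2.2, sum_const, card_univ,
    ← Nat.card_eq_fintype_card, natCard_monic_natDegree_eq]

theorem natCard_units_quotient_span {Q : F[X]} (hQm : Q.Monic) (hQ : Irreducible Q) :
    Nat.card (F[X] ⧸ Ideal.span {Q})ˣ = Fintype.card F ^ Q.natDegree - 1 := by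
  have : (Ideal.span {Q}).IsMaximal := PrincipalIdealRing.isMaximal_of_irreducible hQ
  let := Ideal.Quotient.field (Ideal.span {Q})
  have : Module.Finite F (F[X] ⧸ Ideal.span {Q}) := hQm.finite_adjoinRoot
  rw [Nat.card_units, Module.natCard_eq_pow_finrank (K := F), finrank_quotient_span_eq_natDegree,
    Nat.card_eq_fintype_card]

end Polynomial

section LFunction

variable {F : Type*} [Field F] [Fintype F]

noncomputable abbrev mulCharLFunction (Q : F[X]) (χ : MulChar (F[X] ⧸ Ideal.span {Q}) ℂ)
    (s : ℂ) : ℂ :=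
  ∑' A : {A : F[X] // A.Monic ∧ A.natDegree < Q.natDegree},
    χ (Ideal.Quotient.mk (Ideal.span {Q}) A.1) * ((Fintype.card F : ℂ) ^ (A.1.natDegree : ℂ)) ^ (-s)

theorem iteratedDeriv_mulCharLFunction (Q : F[X]) (χ : MulChar (F[X] ⧸ Ideal.span {Q}) ℂ)
    (k : ℕ) (s : ℂ) :
    iteratedDeriv k (mulCharLFunction Q χ) s
      = ∑ A : {A : F[X] // A.Monic ∧ A.natDegree < Q.natDegree},
          χ (Ideal.Quotient.mk (Ideal.span {Q}) A.1) *
            ((-Complex.log ((Fintype.card F : ℂ) ^ (A.1.natDegree : ℂ))) ^ k *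
              ((Fintype.card F : ℂ) ^ (A.1.natDegree : ℂ)) ^ (-s)) := by
  unfold mulCharLFunction
  simp only [tsum_fintype]
  exact iteratedDeriv_sum_mul_cpow_neg _ _ _
    (fun _ _ => Complex.cpow_ne_zero_iff.mpr (.inl (Nat.cast_ne_zero.mpr Fintype.card_ne_zero))) k s

theorem tsum_ne_one_iteratedDeriv_mulCharLFunction_one_half {Q : F[X]} (hQm : Q.Monic)
    (hQ : Irreducible Q) {k : ℕ} (hk : k ≠ 0) :
    ∑' χ : {χ : MulChar (F[X] ⧸ Ideal.span {Q}) ℂ // χ ≠ 1},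
        iteratedDeriv k (mulCharLFunction Q χ.1) (1 / 2)
      = -(((-Real.log (Fintype.card F)) ^ k *
          ∑ n ∈ range Q.natDegree, (n : ℝ) ^ k * √(Fintype.card F) ^ n : ℝ) : ℂ) := by
  classical
  have : (Ideal.span {Q}).IsMaximal := PrincipalIdealRing.isMaximal_of_irreducible hQ
  let := Ideal.Quotient.field (Ideal.span {Q})
  have : Module.Finite F (F[X] ⧸ Ideal.span {Q}) := hQm.finite_adjoinRoot
  have : Finite (F[X] ⧸ Ideal.span {Q}) := Module.finite_of_finite F
  have : NeZero (Monoid.exponent (F[X] ⧸ Ideal.span {Q})ˣ : ℂ) :=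
    ⟨Nat.cast_ne_zero.mpr Monoid.exponent_ne_zero_of_finite⟩
  have := Fintype.ofFinite (MulChar (F[X] ⧸ Ideal.span {Q}) ℂ)
  set w : ℕ → ℂ := fun n => (-Complex.log ((Fintype.card F : ℂ) ^ (n : ℂ))) ^ k *
    ((Fintype.card F : ℂ) ^ (n : ℂ)) ^ (-(1 / 2) : ℂ)
  have horth (A : {A : F[X] // A.Monic ∧ A.natDegree < Q.natDegree}) :
      (∑ χ ∈ univ.erase (1 : MulChar (F[X] ⧸ Ideal.span {Q}) ℂ),
          χ (Ideal.Quotient.mk (Ideal.span {Q}) A.1)) * w A.1.natDegree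
        = -w A.1.natDegree := by
    rcases eq_or_ne A.1.natDegree 0 with h0 | h0
    · simp [w, h0, hk]
    rw [MulChar.sum_erase_one_apply_eq_neg_one
      (quotient_mk_ne_zero_of_natDegree_lt hQm A.2.1.ne_zero A.2.2).isUnit
      (quotient_mk_ne_one_of_natDegree_lt hQm h0 A.2.2), neg_one_mul]
  rw [tsum_fintype, ← sum_subtype (univ.erase 1) (by simp)
    (fun χ => iteratedDeriv k (mulCharLFunction Q χ) (1 / 2))]
  simp only [iteratedDeriv_mulCharLFunction]
  rw [sum_comm]
  simp only [← sum_mul]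
  rw [sum_congr rfl fun A _ => horth A, sum_neg_distrib, sum_monic_natDegree_lt]
  push_cast
  rw [mul_sum]
  refine congrArg _ (sum_congr rfl fun n _ => ?_)
  rw [nsmul_eq_mul, Nat.cast_pow, pow_mul_neg_log_pow_mul_cpow_neg_half Fintype.card_ne_zero]
  push_cast
  ring

end LFunction

theorem stmt_8 (k : ℕ) (hk : 1 ≤ k) :
    ∃ C : ℝ, 0 < C ∧
      ∀ (F : Type) [Field F] [Fintype F] (Q : Polynomial F), Q.Monic → Irreducible Q →
        ‖((Nat.card (Polynomial F ⧸ Ideal.span {Q})ˣ : ℂ)⁻¹ *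
                (∑' χ : {χ : MulChar (Polynomial F ⧸ Ideal.span {Q}) ℂ // χ ≠ 1},
                  iteratedDeriv k
                    (fun s : ℂ =>
                      ∑' A : {A : Polynomial F // A.Monic ∧ A.natDegree < Q.natDegree},
                        χ.1 (Ideal.Quotient.mk (Ideal.span {Q}) A.1) *
                          ((Fintype.card F : ℂ) ^ (A.1.natDegree : ℂ)) ^ (-s))
                    (1 / 2)) +
              ((-(Real.log (Fintype.card F)) : ℂ) ^ k /
                    ((Real.sqrt (Fintype.card F) : ℂ) - 1)) *
                (Q.natDegree : ℂ) ^ k /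
                (Real.sqrt ((Fintype.card F : ℝ) ^ Q.natDegree) : ℂ))‖
          ≤ C * (Real.log (Fintype.card F)) ^ k * (Q.natDegree : ℝ) ^ (k - 1) /
              Real.sqrt ((Fintype.card F : ℝ) ^ Q.natDegree) := by
  refine ⟨10 + 20 * k, by positivity, fun F _ _ Q hQm hQ => ?_⟩
  rw [tsum_ne_one_iteratedDeriv_mulCharLFunction_one_half hQm hQ (by omega)]
  set q := Fintype.card F
  set D := Q.natDegree
  have hq : (2 : ℝ) ≤ q := by exact_mod_cast Fintype.one_lt_card
  have hq0 : (0 : ℝ) ≤ q := by positivity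
  have hcard : (Nat.card (F[X] ⧸ Ideal.span {Q})ˣ : ℂ) = ((√q ^ (2 * D) - 1 : ℝ) : ℂ) := by
    rw [natCard_units_quotient_span hQm hQ, Nat.cast_sub (Nat.one_le_pow _ _ Fintype.card_pos),
      pow_mul, Real.sq_sqrt hq0]
    push_cast
    ring
  rw [hcard, Real.sqrt_pow hq0]
  calc _ = ‖(((-Real.log q) ^ k * ((D : ℝ) ^ k / ((√q - 1) * √q ^ D)
          - (∑ n ∈ range D, (n : ℝ) ^ k * √q ^ n) / (√q ^ (2 * D) - 1)) : ℝ) : ℂ)‖ := by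
        congr 1
        push_cast
        simp only [div_eq_mul_inv, mul_inv]
        ring
    _ ≤ Real.log q ^ k * ((10 + 20 * k) * (D : ℝ) ^ (k - 1) / √q ^ D) := by
        rw [Complex.norm_real, Real.norm_eq_abs, abs_mul, abs_pow, abs_neg,
          abs_of_nonneg (Real.log_nonneg (by linarith))]
        gcongr
        exact abs_pow_div_sub_sum_div_le (Real.sqrt_le_sqrt hq) k hQ.natDegree_pos
    _ = _ := by ring
end

section
/- Let m be an integer with m >= 3. For all real x with 0 <= x <= 2 m^{1/3}, one has (1 - x/m)^m >= e^{-x} * e^{-4/(m^{1/3} - 2 m^{-1/3})}. -/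
/-!
Since `log (1 - t) ≥ -t / (1 - t)`, taking `t = x / m` gives
`(1 - x/m)^m ≥ exp (-(m x / (m - x))) = exp (-x) * exp (-(x² / (m - x)))`.
With `c = m^{1/3}` and `0 ≤ x ≤ 2c`, the error term is at most `(2c)² / (c³ - 2c) = 4 / (c - 2/c)`.
-/

open Real

lemma Real.exp_neg_div_one_sub_le_one_sub {t : ℝ} (ht : t < 1) :
    exp (-(t / (1 - t))) ≤ 1 - t := by
  have hpos : 0 < 1 - t := by linarith
  calc exp (-(t / (1 - t))) = exp (1 - (1 - t)⁻¹) := by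
        congr 1; field_simp; ring
    _ ≤ exp (log (1 - t)) := exp_le_exp.2 (one_sub_inv_le_log_of_pos hpos)
    _ = 1 - t := exp_log hpos

lemma Real.exp_neg_mul_div_sub_le_one_sub_div_pow (m : ℕ) {x : ℝ} (hx : x < m) :
    exp (-(m * x / (m - x))) ≤ (1 - x / m) ^ m := by
  rcases Nat.eq_zero_or_pos m with rfl | hm
  · simp
  have hm' : (0 : ℝ) < m := by exact_mod_cast hm
  have hxm : x / m < 1 := (div_lt_one hm').2 hx
  have hsub : (m : ℝ) - x ≠ 0 := by linarith
  calc exp (-(m * x / (m - x))) = exp (-(x / m / (1 - x / m))) ^ m := by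
        rw [← exp_nat_mul]; congr 1; field_simp
    _ ≤ (1 - x / m) ^ m :=
        pow_le_pow_left₀ (exp_nonneg _) (exp_neg_div_one_sub_le_one_sub hxm) m

lemma cube_mul_div_cube_sub_le_add {c x : ℝ} (hc : 0 < c) (hc2 : 2 < c ^ 2)
    (hx : 0 ≤ x) (hxc : x ≤ 2 * c) :
    c ^ 3 * x / (c ^ 3 - x) ≤ x + 4 / (c - 2 * c⁻¹) := by
  have hgap : 0 < c ^ 3 - 2 * c := by nlinarith
  have hsub : c ^ 3 - x ≠ 0 := by linarith
  have hsplit : c ^ 3 * x / (c ^ 3 - x) = x + x ^ 2 / (c ^ 3 - x) := by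
    field_simp; ring
  have hbound : 4 / (c - 2 * c⁻¹) = (2 * c) ^ 2 / (c ^ 3 - 2 * c) := by
    field_simp; ring
  rw [hsplit, hbound]
  gcongr

theorem stmt_12 (m : ℕ) (hm : 3 ≤ m) (x : ℝ) (hx : 0 ≤ x)
    (hx' : x ≤ 2 * (m : ℝ) ^ ((1 : ℝ) / 3)) :
    (1 - x / m) ^ m ≥
      Real.exp (-x) *
        Real.exp (-4 / ((m : ℝ) ^ ((1 : ℝ) / 3) - 2 * (m : ℝ) ^ (-(1 : ℝ) / 3))) := by
  set c : ℝ := (m : ℝ) ^ ((1 : ℝ) / 3) with hc_def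
  have hm3 : (3 : ℝ) ≤ m := by exact_mod_cast hm
  have hc : 0 < c := by positivity
  have hc3 : c ^ 3 = m := by
    rw [hc_def, one_div, ← Nat.cast_ofNat, rpow_inv_natCast_pow (Nat.cast_nonneg m) three_ne_zero]
  have hcinv : (m : ℝ) ^ (-(1 : ℝ) / 3) = c⁻¹ := by
    rw [neg_div, rpow_neg (Nat.cast_nonneg m)]
  have hc2 : 2 < c ^ 2 := by
    refine lt_of_pow_lt_pow_left₀ 3 (sq_nonneg c) ?_
    nlinarith [show (c ^ 2) ^ 3 = (m : ℝ) ^ 2 by rw [← hc3]; ring]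
  have hxm : x < m := by nlinarith
  rw [hcinv, ← exp_add, ge_iff_le]
  calc exp (-x + -4 / (c - 2 * c⁻¹)) ≤ exp (-(m * x / (m - x))) := by
        rw [exp_le_exp, neg_div, ← neg_add, neg_le_neg_iff, ← hc3]
        exact cube_mul_div_cube_sub_le_add hc hc2 hx hx'
    _ ≤ (1 - x / m) ^ m := exp_neg_mul_div_sub_le_one_sub_div_pow m hxm
end

section
/- As m -> infinity over positive integers, m^4 times the integral over the region {a1, a2, a3, a4 >= 0, 2a1 + a3 + a4 < 1, 2a2 + a3 + a4 < 1} of (1 - a1 - a3)^m (1 - a1 - a4)^m (1 - a2 - a3)^m (1 - a2 - a4)^m with respect to da1 da2 da3 da4 tends to 1/16. -/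
/-!
Substituting `a = x / m` turns `m ^ 4 * ∫` into the integral of a function that is dominated by
`∏ i, 1_{x i ≥ 0} exp (-2 x i)` because `(1 - t / m) ^ m ≤ exp (-t)`, and converges pointwise to it
because `(1 - t / m) ^ m → exp (-t)`: the four linear forms `a i + a j` add up to `2 ∑ i, a i`.
Dominated convergence gives the limit `(∫₀^∞ exp (-2 t) dt) ^ 4 = 1 / 16`.
-/

open MeasureTheory Set Filter Real Topology

section Rescaling

variable {E F : Type*} [NormedAddCommGroup E] [NormedSpace ℝ E] [MeasurableSpace E] [BorelSpace E]
  [FiniteDimensional ℝ E] [NormedAddCommGroup F] [NormedSpace ℝ F]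
  (μ : Measure E) [μ.IsAddHaarMeasure]

theorem integral_indicator_comp_inv_smul {s : Set E} (hs : MeasurableSet s) (f : E → F) {R : ℝ}
    (hR : 0 ≤ R) :
    ∫ x, s.indicator f (R⁻¹ • x) ∂μ = R ^ Module.finrank ℝ E • ∫ x in s, f x ∂μ := by
  rw [Measure.integral_comp_inv_smul_of_nonneg μ _ hR, integral_indicator hs]

end Rescaling

theorem one_sub_div_pow_mem_Icc {n : ℕ} {t : ℝ} (ht : t ≤ n) :
    (1 - t / n) ^ n ∈ Icc 0 (exp (-t)) := by
  refine ⟨pow_nonneg (sub_nonneg.2 ?_) n, one_sub_div_pow_le_exp_neg ht⟩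
  exact div_le_one_of_le₀ ht n.cast_nonneg

theorem tendsto_one_sub_div_pow_exp (t : ℝ) :
    Tendsto (fun n : ℕ => (1 - t / n) ^ n) atTop (𝓝 (exp (-t))) := by
  simpa only [neg_div, ← sub_eq_add_neg] using tendsto_one_add_div_pow_exp (-t)

theorem integral_indicator_Ici_exp_neg_mul {b : ℝ} (hb : 0 < b) :
    ∫ t, (Ici 0).indicator (fun t => exp (-b * t)) t = b⁻¹ := by
  rw [integral_indicator measurableSet_Ici, integral_Ici_eq_integral_Ioi,
    integral_exp_mul_Ioi (neg_lt_zero.2 hb)]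
  simp

theorem integrable_indicator_Ici_exp_neg_mul {b : ℝ} (hb : 0 < b) :
    Integrable ((Ici 0).indicator fun t => exp (-b * t)) := by
  rw [integrable_indicator_iff measurableSet_Ici, integrableOn_Ici_iff_integrableOn_Ioi]
  exact exp_neg_integrableOn_Ioi 0 hb

namespace LaplaceQuadrupleIntegral

noncomputable section

def region : Set (Fin 4 → ℝ) :=
  {a | (∀ i, 0 ≤ a i) ∧ 2 * a 0 + a 2 + a 3 < 1 ∧ 2 * a 1 + a 2 + a 3 < 1}

def integrand (m : ℕ) (a : Fin 4 → ℝ) : ℝ :=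
  (1 - a 0 - a 2) ^ m * (1 - a 0 - a 3) ^ m * (1 - a 1 - a 2) ^ m * (1 - a 1 - a 3) ^ m

def rescaled (m : ℕ) (x : Fin 4 → ℝ) : ℝ := region.indicator (integrand m) ((m : ℝ)⁻¹ • x)

def limitDensity (x : Fin 4 → ℝ) : ℝ := ∏ i, (Ici 0).indicator (fun t => exp (-2 * t)) (x i)

theorem measurableSet_region : MeasurableSet region := by
  simp only [region, ofPred_and, ofPred_forall]
  exact (MeasurableSet.iInter fun i => measurableSet_le measurable_const (by fun_prop)).inter
    ((measurableSet_lt (by fun_prop) measurable_const).inter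
      (measurableSet_lt (by fun_prop) measurable_const))

theorem measurable_rescaled (m : ℕ) : Measurable (rescaled m) :=
  ((by unfold integrand; fun_prop : Measurable (integrand m)).indicator measurableSet_region).comp
    (measurable_const_smul _)

theorem integral_rescaled (m : ℕ) :
    ∫ x, rescaled m x = (m : ℝ) ^ 4 * ∫ a in region, integrand m a := by
  simpa [rescaled] using
    integral_indicator_comp_inv_smul volume measurableSet_region (integrand m) m.cast_nonneg

theorem integrand_inv_smul (m : ℕ) (x : Fin 4 → ℝ) :
    integrand m ((m : ℝ)⁻¹ • x) = (1 - (x 0 + x 2) / m) ^ m * (1 - (x 0 + x 3) / m) ^ m *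
      (1 - (x 1 + x 2) / m) ^ m * (1 - (x 1 + x 3) / m) ^ m := by
  simp only [integrand, Pi.smul_apply, smul_eq_mul]
  ring

theorem inv_smul_mem_region_iff {m : ℕ} (hm : 0 < m) {x : Fin 4 → ℝ} :
    (m : ℝ)⁻¹ • x ∈ region ↔
      (∀ i, 0 ≤ x i) ∧ 2 * x 0 + x 2 + x 3 < m ∧ 2 * x 1 + x 2 + x 3 < m := by
  have hm' : (0 : ℝ) < m := Nat.cast_pos.2 hm
  have lt_one_iff (u v w : ℝ) : 2 * ((m : ℝ)⁻¹ * u) + (m : ℝ)⁻¹ * v + (m : ℝ)⁻¹ * w < 1 ↔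
      2 * u + v + w < m := by
    rw [← div_lt_one hm']
    ring_nf
  simp only [region, mem_ofPred_eq, Pi.smul_apply, smul_eq_mul,
    mul_nonneg_iff_of_pos_left (inv_pos.2 hm'), lt_one_iff]

theorem limitDensity_of_nonneg {x : Fin 4 → ℝ} (hx : ∀ i, 0 ≤ x i) :
    limitDensity x = exp (-(x 0 + x 2)) * exp (-(x 0 + x 3)) * exp (-(x 1 + x 2)) *
      exp (-(x 1 + x 3)) := by
  simp only [limitDensity, Fin.prod_univ_four, indicator_of_mem (mem_Ici.2 (hx _)), ← exp_add]
  ring_nf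

theorem limitDensity_of_neg {x : Fin 4 → ℝ} {i : Fin 4} (hi : x i < 0) : limitDensity x = 0 :=
  Finset.prod_eq_zero (Finset.mem_univ i) (indicator_of_notMem (notMem_Ici.2 hi) _)

theorem limitDensity_nonneg (x : Fin 4 → ℝ) : 0 ≤ limitDensity x :=
  Finset.prod_nonneg fun _ _ => indicator_nonneg (fun _ _ => (exp_pos _).le) _

theorem integral_limitDensity : ∫ x, limitDensity x = 1 / 16 := by
  simp only [limitDensity]
  rw [integral_fintype_prod_volume_eq_prod (fun _ => _),
    integral_indicator_Ici_exp_neg_mul two_pos]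
  norm_num

theorem integrable_limitDensity : Integrable limitDensity :=
  Integrable.fintype_prod fun _ => integrable_indicator_Ici_exp_neg_mul two_pos

theorem norm_rescaled_le {m : ℕ} (hm : 0 < m) (x : Fin 4 → ℝ) :
    ‖rescaled m x‖ ≤ limitDensity x := by
  by_cases hx : (m : ℝ)⁻¹ • x ∈ region
  · obtain ⟨hx0, h0, h1⟩ := (inv_smul_mem_region_iff hm).1 hx
    obtain ⟨h02₀, h02⟩ := one_sub_div_pow_mem_Icc (n := m) (t := x 0 + x 2)
      (by linarith [hx0 0, hx0 3])
    obtain ⟨h03₀, h03⟩ := one_sub_div_pow_mem_Icc (n := m) (t := x 0 + x 3)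
      (by linarith [hx0 0, hx0 2])
    obtain ⟨h12₀, h12⟩ := one_sub_div_pow_mem_Icc (n := m) (t := x 1 + x 2)
      (by linarith [hx0 1, hx0 3])
    obtain ⟨h13₀, h13⟩ := one_sub_div_pow_mem_Icc (n := m) (t := x 1 + x 3)
      (by linarith [hx0 1, hx0 2])
    rw [rescaled, indicator_of_mem hx, integrand_inv_smul, limitDensity_of_nonneg hx0,
      norm_of_nonneg (by positivity)]
    gcongr
  · rw [rescaled, indicator_of_notMem hx, norm_zero]
    exact limitDensity_nonneg x

theorem tendsto_rescaled (x : Fin 4 → ℝ) :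
    Tendsto (fun m => rescaled m x) atTop (𝓝 (limitDensity x)) := by
  by_cases hx0 : ∀ i, 0 ≤ x i
  · rw [limitDensity_of_nonneg hx0]
    refine ((((tendsto_one_sub_div_pow_exp _).mul (tendsto_one_sub_div_pow_exp _)).mul
      (tendsto_one_sub_div_pow_exp _)).mul (tendsto_one_sub_div_pow_exp _)).congr' ?_
    have hcast : Tendsto (fun m : ℕ => (m : ℝ)) atTop atTop := tendsto_natCast_atTop_atTop
    filter_upwards [eventually_gt_atTop 0, hcast.eventually_gt_atTop (2 * x 0 + x 2 + x 3),
      hcast.eventually_gt_atTop (2 * x 1 + x 2 + x 3)] with m hm h0 h1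
    rw [rescaled, indicator_of_mem ((inv_smul_mem_region_iff hm).2 ⟨hx0, h0, h1⟩),
      integrand_inv_smul]
  · obtain ⟨i, hi⟩ := not_forall.1 hx0
    rw [limitDensity_of_neg (not_le.1 hi)]
    refine tendsto_const_nhds.congr' ?_
    filter_upwards [eventually_gt_atTop 0] with m hm
    rw [rescaled, indicator_of_notMem fun h => hi (((inv_smul_mem_region_iff hm).1 h).1 i)]

end

end LaplaceQuadrupleIntegral

theorem stmt_13 :
    Filter.Tendsto
      (fun m : ℕ => (m : ℝ) ^ 4 *
        ∫ a in {a : Fin 4 → ℝ | (∀ i, 0 ≤ a i) ∧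
            2 * a 0 + a 2 + a 3 < 1 ∧ 2 * a 1 + a 2 + a 3 < 1},
          (1 - a 0 - a 2) ^ m * (1 - a 0 - a 3) ^ m *
            (1 - a 1 - a 2) ^ m * (1 - a 1 - a 3) ^ m)
      Filter.atTop (nhds (1 / 16)) := by
  open LaplaceQuadrupleIntegral in
  · have h := tendsto_integral_filter_of_dominated_convergence limitDensity
      (.of_forall fun m => (measurable_rescaled m).aestronglyMeasurable)
      ((eventually_gt_atTop 0).mono fun m hm => ae_of_all _ (norm_rescaled_le hm))
      integrable_limitDensity (ae_of_all _ tendsto_rescaled)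
    rwa [funext integral_rescaled, integral_limitDensity] at h
end

section
/- Define D_m for a nonnegative integer m as the integral over {a1,a2,a3,a4 >= 0, 2a1+a3+a4 < 1, 2a2+a3+a4 < 1} of ((a1+a3)^m (a1+a4)^m + (1-a1-a3)^m (1-a1-a4)^m) * ((a2+a3)^m (a2+a4)^m + (1-a2-a3)^m (1-a2-a4)^m) da1 da2 da3 da4. Then D_m ~ 1/(16 m^4) as m -> infinity, i.e., 16 m^4 D_m -> 1. -/
/-!
For fixed `(u, v) = (a 2, a 3)` the region is the product of two copies of
`0 ≤ x < (1 - u - v) / 2` in the coordinates `a 0, a 1`, and the integrand is the product of the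
values of `P(x) = (x+u)^m (x+v)^m + (1-x-u)^m (1-x-v)^m` (`slicePoly`) at those coordinates.
By Fubini, `D_m = ∫_{u,v ≥ 0} J(u,v)^2` with `J(u, v) = ∫_0^{(1-u-v)/2} P` (`sliceIntegral`).

AM-GM on both products in `P` gives `J ≤ (1 - t/2)^(2m+1) / (2m+1)`, `t = u + v`. Conversely
`(1-x-u)(1-x-v) ≥ y^2 - t^2/4` with `y = 1 - x - t/2 ≥ 1/2`, and Bernoulli's inequality gives
`J ≥ (1 - m t^2) (1 - (2/3)^(2m+1)) (1 - t/2)^(2m+1) / (2m+1)` for `t ≤ 1/2`. Both bounds reduce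
`D_m` to the explicit integral of `(1 - t/2)^(4m+2)` over a square `[0, c]^2`, which is
`~ 1 / (4 m^2)` as soon as `m c → ∞`. The lower bound also needs `m c^2 → 0`: take
`c = m^(-3/5)`.
-/

open MeasureTheory Set Filter Topology

theorem integral_const_add_pow (c a b : ℝ) (n : ℕ) :
    ∫ x in a..b, (c + x) ^ n = ((c + b) ^ (n + 1) - (c + a) ^ (n + 1)) / (n + 1) := by
  rw [intervalIntegral.integral_comp_add_left (· ^ n), integral_pow]

theorem integral_const_sub_pow (c a b : ℝ) (n : ℕ) :
    ∫ x in a..b, (c - x) ^ n = ((c - a) ^ (n + 1) - (c - b) ^ (n + 1)) / (n + 1) := by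
  rw [intervalIntegral.integral_comp_sub_left (· ^ n), integral_pow]

theorem integral_const_sub_half_pow (c a b : ℝ) (n : ℕ) :
    ∫ x in a..b, (c - x / 2) ^ n =
      2 * ((c - a / 2) ^ (n + 1) - (c - b / 2) ^ (n + 1)) / (n + 1) := by
  rw [intervalIntegral.integral_comp_div (fun y => (c - y) ^ n) two_ne_zero,
    integral_const_sub_pow, smul_eq_mul]
  ring

theorem one_sub_mul_div_mul_pow_le_pow_sub {a b : ℝ} (ha : 0 < a) (hb : b ≤ 2 * a) (n : ℕ) :
    (1 - n * (b / a)) * a ^ n ≤ (a - b) ^ n := by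
  have hfac : a - b = (1 + -(b / a)) * a := by field_simp; ring
  have hbern := one_add_mul_le_pow (a := -(b / a))
    (by rw [neg_le_neg_iff, div_le_iff₀ ha]; linarith) n
  rw [hfac, mul_pow]
  exact mul_le_mul_of_nonneg_right (by linarith) (by positivity)

theorem pow_mul_pow_le_add_div_two_pow {p q : ℝ} (hp : 0 ≤ p) (hq : 0 ≤ q) (n : ℕ) :
    p ^ n * q ^ n ≤ ((p + q) / 2) ^ (2 * n) := by
  rw [← mul_pow, pow_mul]
  exact pow_le_pow_left₀ (by positivity) (by nlinarith [sq_nonneg (p - q)]) n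

def slicePoly (m : ℕ) (u v x : ℝ) : ℝ :=
  (x + u) ^ m * (x + v) ^ m + (1 - x - u) ^ m * (1 - x - v) ^ m

noncomputable def sliceIntegral (m : ℕ) (u v : ℝ) : ℝ :=
  ∫ x in Ico 0 ((1 - u - v) / 2), slicePoly m u v x

theorem continuous_slicePoly (m : ℕ) (u v : ℝ) : Continuous (slicePoly m u v) := by
  unfold slicePoly; fun_prop

theorem sliceIntegral_eq_intervalIntegral (m : ℕ) {u v : ℝ} (h : u + v ≤ 1) :
    sliceIntegral m u v = ∫ x in 0..(1 - u - v) / 2, slicePoly m u v x := by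
  rw [sliceIntegral, intervalIntegral.integral_of_le (by linarith), integral_Ico_eq_integral_Ioc]

theorem sliceIntegral_of_one_le (m : ℕ) {u v : ℝ} (h : 1 ≤ u + v) :
    sliceIntegral m u v = 0 := by
  rw [sliceIntegral, Ico_eq_empty (by linarith), setIntegral_empty]

theorem slicePoly_nonneg (m : ℕ) {u v x : ℝ} (hu : 0 ≤ u) (hv : 0 ≤ v) (hx : 0 ≤ x)
    (hxuv : x < (1 - u - v) / 2) : 0 ≤ slicePoly m u v x := by
  have : 0 ≤ 1 - x - u := by linarith
  have : 0 ≤ 1 - x - v := by linarith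
  unfold slicePoly; positivity

theorem sliceIntegral_nonneg (m : ℕ) {u v : ℝ} (hu : 0 ≤ u) (hv : 0 ≤ v) :
    0 ≤ sliceIntegral m u v :=
  setIntegral_nonneg measurableSet_Ico fun _ hx => slicePoly_nonneg m hu hv hx.1 hx.2

theorem sliceIntegral_le (m : ℕ) {u v : ℝ} (hu : 0 ≤ u) (hv : 0 ≤ v) (huv : u + v ≤ 2) :
    sliceIntegral m u v ≤ (1 - (u + v) / 2) ^ (2 * m + 1) / (2 * m + 1) := by
  rcases le_total 1 (u + v) with h | h
  · rw [sliceIntegral_of_one_le m h]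
    have : 0 ≤ 1 - (u + v) / 2 := by linarith
    positivity
  obtain ⟨s, hs⟩ : ∃ s, (u + v) / 2 = s := ⟨_, rfl⟩
  have hP : ∀ x ∈ Icc 0 ((1 - u - v) / 2),
      slicePoly m u v x ≤ (s + x) ^ (2 * m) + (1 - s - x) ^ (2 * m) := by
    rintro x ⟨hx0, hx1⟩
    have h1 := pow_mul_pow_le_add_div_two_pow
      (by linarith : 0 ≤ x + u) (by linarith : 0 ≤ x + v) m
    have h2 := pow_mul_pow_le_add_div_two_pow
      (by linarith : 0 ≤ 1 - x - u) (by linarith : 0 ≤ 1 - x - v) m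
    unfold slicePoly
    rw [← hs]
    refine (add_le_add h1 h2).trans_eq ?_
    ring
  have hcont : Continuous fun x => (s + x) ^ (2 * m) + (1 - s - x) ^ (2 * m) := by fun_prop
  rw [sliceIntegral_eq_intervalIntegral m h]
  calc ∫ x in 0..(1 - u - v) / 2, slicePoly m u v x
      ≤ ∫ x in 0..(1 - u - v) / 2, ((s + x) ^ (2 * m) + (1 - s - x) ^ (2 * m)) :=
        intervalIntegral.integral_mono_on (by linarith)
          ((continuous_slicePoly m u v).intervalIntegrable _ _) (hcont.intervalIntegrable _ _) hP
    _ = ((1 - s) ^ (2 * m + 1) - s ^ (2 * m + 1)) / (2 * m + 1) := by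
        rw [intervalIntegral.integral_add (by apply Continuous.intervalIntegrable; fun_prop)
          (by apply Continuous.intervalIntegrable; fun_prop), integral_const_add_pow,
          integral_const_sub_pow, show s + (1 - u - v) / 2 = 1 / 2 by linarith,
          show 1 - s - (1 - u - v) / 2 = 1 / 2 by linarith]
        push_cast
        ring
    _ ≤ (1 - (u + v) / 2) ^ (2 * m + 1) / (2 * m + 1) := by
        rw [hs]
        gcongr
        have : 0 ≤ s := by linarith
        linarith [pow_nonneg this (2 * m + 1)]

theorem le_sliceIntegral (m : ℕ) {u v : ℝ} (hu : 0 ≤ u) (hv : 0 ≤ v) (huv : u + v ≤ 1 / 2)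
    (hm : m * (u + v) ^ 2 ≤ 1) :
    (1 - m * (u + v) ^ 2) * (1 - (2 / 3) ^ (2 * m + 1)) * (1 - (u + v) / 2) ^ (2 * m + 1)
      / (2 * m + 1) ≤ sliceIntegral m u v := by
  obtain ⟨t, ht⟩ : ∃ t, u + v = t := ⟨_, rfl⟩
  rw [ht] at hm ⊢
  have hP : ∀ x ∈ Icc 0 ((1 - u - v) / 2),
      (1 - m * t ^ 2) * (1 - t / 2 - x) ^ (2 * m) ≤ slicePoly m u v x := by
    rintro x ⟨hx0, hx1⟩
    obtain ⟨y, hy_def⟩ : ∃ y, 1 - t / 2 - x = y := ⟨_, rfl⟩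
    have hy : 1 / 2 ≤ y := by linarith
    have bern := one_sub_mul_div_mul_pow_le_pow_sub (a := y ^ 2) (b := t ^ 2 / 4) (by positivity)
      (by nlinarith) m
    have hdiv : t ^ 2 / 4 / y ^ 2 ≤ t ^ 2 := by
      have : 1 / 4 ≤ y ^ 2 := by nlinarith
      rw [div_le_iff₀ (by positivity)]
      nlinarith [mul_le_mul_of_nonneg_left this (sq_nonneg t)]
    have hprod : y ^ 2 - t ^ 2 / 4 ≤ (1 - x - u) * (1 - x - v) := by
      rw [← hy_def, ← ht]; nlinarith
    have hfirst : 0 ≤ (x + u) ^ m * (x + v) ^ m := by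
      have : 0 ≤ x + u := by linarith
      have : 0 ≤ x + v := by linarith
      positivity
    rw [hy_def]
    calc (1 - m * t ^ 2) * y ^ (2 * m)
        ≤ (1 - m * (t ^ 2 / 4 / y ^ 2)) * (y ^ 2) ^ m := by
          rw [← pow_mul]
          exact mul_le_mul_of_nonneg_right (by gcongr) (by positivity)
      _ ≤ (y ^ 2 - t ^ 2 / 4) ^ m := bern
      _ ≤ ((1 - x - u) * (1 - x - v)) ^ m :=
          pow_le_pow_left₀ (by nlinarith) hprod m
      _ ≤ slicePoly m u v x := by
          rw [mul_pow]; unfold slicePoly; linarith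
  have hhalf : (1 - (2 / 3) ^ (2 * m + 1)) * (1 - t / 2) ^ (2 * m + 1) ≤
      (1 - t / 2) ^ (2 * m + 1) - (1 / 2) ^ (2 * m + 1) := by
    have : (1 / 2 : ℝ) ^ (2 * m + 1) ≤ (2 / 3) ^ (2 * m + 1) * (1 - t / 2) ^ (2 * m + 1) := by
      rw [← mul_pow]; exact pow_le_pow_left₀ (by norm_num) (by linarith) _
    linarith
  rw [sliceIntegral_eq_intervalIntegral m (by linarith)]
  calc (1 - m * t ^ 2) * (1 - (2 / 3) ^ (2 * m + 1)) * (1 - t / 2) ^ (2 * m + 1) / (2 * m + 1)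
      ≤ (1 - m * t ^ 2) *
          (((1 - t / 2) ^ (2 * m + 1) - (1 / 2) ^ (2 * m + 1)) / (2 * m + 1)) := by
        rw [mul_assoc, mul_div_assoc]
        exact mul_le_mul_of_nonneg_left (div_le_div_of_nonneg_right hhalf (by positivity))
          (by linarith)
    _ = ∫ x in 0..(1 - u - v) / 2, (1 - m * t ^ 2) * (1 - t / 2 - x) ^ (2 * m) := by
        rw [intervalIntegral.integral_const_mul, integral_const_sub_pow,
          show 1 - t / 2 - (1 - u - v) / 2 = 1 / 2 by linarith]
        push_cast
        ring
    _ ≤ ∫ x in 0..(1 - u - v) / 2, slicePoly m u v x :=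
        intervalIntegral.integral_mono_on (by linarith)
          (by apply Continuous.intervalIntegrable; fun_prop)
          ((continuous_slicePoly m u v).intervalIntegrable _ _) hP

theorem integral_square_one_sub_half_add_pow (k : ℕ) {c : ℝ} (hc : 0 ≤ c) :
    ∫ p in Icc 0 c ×ˢ Icc 0 c, (1 - (p.1 + p.2) / 2) ^ k =
      4 * (1 - 2 * (1 - c / 2) ^ (k + 2) + (1 - c) ^ (k + 2)) / ((k + 1) * (k + 2)) := by
  have hint : IntegrableOn (fun p : ℝ × ℝ => (1 - (p.1 + p.2) / 2) ^ k) (Icc 0 c ×ˢ Icc 0 c)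
      (volume.prod volume) := by
    rw [← Measure.volume_eq_prod, Icc_prod_Icc]
    exact (by fun_prop : Continuous _).integrableOn_Icc
  have hinner : ∀ u : ℝ, ∫ v in Icc 0 c, (1 - (u + v) / 2) ^ k =
      2 / (k + 1) * (1 - u / 2) ^ (k + 1) - 2 / (k + 1) * (1 - c / 2 - u / 2) ^ (k + 1) := by
    intro u
    rw [integral_Icc_eq_integral_Ioc, ← intervalIntegral.integral_of_le hc]
    simp_rw [show ∀ v : ℝ, 1 - (u + v) / 2 = (1 - u / 2) - v / 2 by intro v; ring]
    rw [integral_const_sub_half_pow]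
    ring
  rw [Measure.volume_eq_prod, setIntegral_prod _ hint]
  simp_rw [hinner]
  rw [integral_Icc_eq_integral_Ioc, ← intervalIntegral.integral_of_le hc,
    intervalIntegral.integral_sub (by apply Continuous.intervalIntegrable; fun_prop)
      (by apply Continuous.intervalIntegrable; fun_prop),
    intervalIntegral.integral_const_mul, intervalIntegral.integral_const_mul,
    integral_const_sub_half_pow, integral_const_sub_half_pow]
  have : (k : ℝ) + 1 + 1 ≠ 0 := by positivity
  push_cast
  field_simp
  ring

/-- `a ↦ ((a 2, a 3), ![a 0, a 1])`. -/
def finFourEquiv : (Fin 4 → ℝ) ≃ᵐ (ℝ × ℝ) × (Fin 2 → ℝ) :=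
  ((MeasurableEquiv.piFinSuccAbove (fun _ => ℝ) 2).trans
    ((MeasurableEquiv.refl ℝ).prodCongr (MeasurableEquiv.piFinSuccAbove (fun _ => ℝ) 2))).trans
    MeasurableEquiv.prodAssoc.symm

theorem measurePreserving_finFourEquiv : MeasurePreserving finFourEquiv := by
  have h1 := volume_preserving_piFinSuccAbove (fun _ : Fin 4 => ℝ) 2
  have h2 := (MeasurePreserving.id (volume : Measure ℝ)).prod
    (volume_preserving_piFinSuccAbove (fun _ : Fin 3 => ℝ) 2)
  exact (volume_preserving_prodAssoc.symm _).comp (h2.comp h1)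

def region : Set (Fin 4 → ℝ) :=
  {a | (∀ i, 0 ≤ a i) ∧ 2 * a 0 + a 2 + a 3 < 1 ∧ 2 * a 1 + a 2 + a 3 < 1}

noncomputable def sliceDensity (m : ℕ) : ℝ × ℝ → ℝ :=
  (Ici 0 ×ˢ Ici 0).indicator fun p => sliceIntegral m p.1 p.2 ^ 2

noncomputable def fiberIntegrand (m : ℕ) (z : (ℝ × ℝ) × (Fin 2 → ℝ)) : ℝ :=
  (Ici 0 ×ˢ Ici 0).indicator
    (fun p => ∏ i, (Ico 0 ((1 - p.1 - p.2) / 2)).indicator (slicePoly m p.1 p.2) (z.2 i)) z.1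

theorem fiberIntegrand_finFourEquiv (m : ℕ) (a : Fin 4 → ℝ) :
    fiberIntegrand m (finFourEquiv a) =
      region.indicator
        (fun a => slicePoly m (a 2) (a 3) (a 0) * slicePoly m (a 2) (a 3) (a 1)) a := by
  change (Ici 0 ×ˢ Ici 0).indicator (fun p => ∏ i, (Ico 0 ((1 - p.1 - p.2) / 2)).indicator
    (slicePoly m p.1 p.2) (![a 0, a 1] i)) (a 2, a 3) = _
  have hall : (∀ i, 0 ≤ a i) ↔ 0 ≤ a 0 ∧ 0 ≤ a 1 ∧ 0 ≤ a 2 ∧ 0 ≤ a 3 := by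
    simp [Fin.forall_fin_succ]
  simp only [indicator_apply, region, Fin.prod_univ_two, mem_prod, mem_Ici, mem_Ico, mem_ofPred_eq,
    hall, Matrix.cons_val_zero, Matrix.cons_val_one]
  split_ifs <;> grind

theorem measurableSet_region : MeasurableSet region := by
  unfold region
  measurability

theorem region_subset_Icc : region ⊆ Icc 0 1 := by
  rintro a ⟨hpos, h0, h1⟩
  have := hpos 0; have := hpos 1; have := hpos 2; have := hpos 3
  refine ⟨hpos, fun i => ?_⟩
  fin_cases i <;> simp <;> linarith

theorem integrable_fiberIntegrand (m : ℕ) :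
    Integrable (fiberIntegrand m) (volume.prod volume) := by
  rw [← Measure.volume_eq_prod, ← measurePreserving_finFourEquiv.integrable_comp_emb
    finFourEquiv.measurableEmbedding]
  have : fiberIntegrand m ∘ finFourEquiv = region.indicator
      (fun a => slicePoly m (a 2) (a 3) (a 0) * slicePoly m (a 2) (a 3) (a 1)) :=
    funext (fiberIntegrand_finFourEquiv m)
  rw [this, integrable_indicator_iff measurableSet_region]
  refine IntegrableOn.mono_set ?_ region_subset_Icc
  exact (by unfold slicePoly; fun_prop : Continuous _).integrableOn_Icc

theorem integral_fiberIntegrand (m : ℕ) (p : ℝ × ℝ) :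
    ∫ y, fiberIntegrand m (p, y) = sliceDensity m p := by
  by_cases hp : p ∈ Ici 0 ×ˢ Ici 0
  · simp only [fiberIntegrand, sliceDensity, indicator_of_mem hp]
    rw [integral_fintype_prod_volume_eq_pow, integral_indicator measurableSet_Ico]
    rfl
  · simp only [fiberIntegrand, sliceDensity, indicator_of_notMem hp, integral_zero]

theorem integral_region_eq_integral_sliceDensity (m : ℕ) :
    ∫ a in region, slicePoly m (a 2) (a 3) (a 0) * slicePoly m (a 2) (a 3) (a 1) =
      ∫ p, sliceDensity m p := by
  rw [← integral_indicator measurableSet_region, ← funext (fiberIntegrand_finFourEquiv m),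
    measurePreserving_finFourEquiv.integral_comp' (f := finFourEquiv) (g := fiberIntegrand m),
    Measure.volume_eq_prod, integral_prod _ (integrable_fiberIntegrand m)]
  simp only [integral_fiberIntegrand]

theorem integrable_sliceDensity (m : ℕ) : Integrable (sliceDensity m) :=
  (integrable_fiberIntegrand m).integral_prod_left.congr
    (ae_of_all _ (integral_fiberIntegrand m))

theorem sliceDensity_nonneg (m : ℕ) (p : ℝ × ℝ) : 0 ≤ sliceDensity m p :=
  indicator_nonneg (fun _ _ => sq_nonneg _) p

theorem integral_sliceDensity_le (m : ℕ) :
    ∫ p, sliceDensity m p ≤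
      (∫ p in Icc 0 1 ×ˢ Icc 0 1, (1 - (p.1 + p.2) / 2) ^ (4 * m + 2)) / (2 * m + 1) ^ 2 := by
  have hpt : ∀ p, sliceDensity m p ≤ (Icc 0 1 ×ˢ Icc 0 1).indicator
      (fun p : ℝ × ℝ => ((1 - (p.1 + p.2) / 2) ^ (2 * m + 1) / (2 * m + 1)) ^ 2) p := by
    rintro ⟨u, v⟩
    by_cases hp : (u, v) ∈ Ici 0 ×ˢ Ici 0
    · rw [sliceDensity, indicator_of_mem hp]
      obtain ⟨hu, hv⟩ : 0 ≤ u ∧ 0 ≤ v := hp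
      by_cases hbox : (u, v) ∈ Icc 0 1 ×ˢ Icc 0 1
      · rw [indicator_of_mem hbox]
        obtain ⟨⟨-, hu1⟩, -, hv1⟩ := hbox
        exact pow_le_pow_left₀ (sliceIntegral_nonneg m hu hv)
          (sliceIntegral_le m hu hv (by linarith)) 2
      · have : 1 ≤ u + v := by
          simp only [mem_prod, mem_Icc, not_and_or, not_le] at hbox
          rcases hbox with (h | h) | (h | h) <;> linarith
        rw [sliceIntegral_of_one_le m this, indicator_of_notMem hbox]
        norm_num
    · rw [sliceDensity, indicator_of_notMem hp]
      exact indicator_nonneg (fun _ _ => by positivity) _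
  calc ∫ p, sliceDensity m p
      ≤ ∫ p, (Icc 0 1 ×ˢ Icc 0 1).indicator
          (fun p : ℝ × ℝ => ((1 - (p.1 + p.2) / 2) ^ (2 * m + 1) / (2 * m + 1)) ^ 2) p := by
        refine integral_mono_of_nonneg (ae_of_all _ (sliceDensity_nonneg m)) ?_ (ae_of_all _ hpt)
        rw [integrable_indicator_iff (measurableSet_Icc.prod measurableSet_Icc), Icc_prod_Icc]
        exact (by fun_prop : Continuous _).integrableOn_Icc
    _ = _ := by
        rw [integral_indicator (measurableSet_Icc.prod measurableSet_Icc), ← integral_div]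
        congr with p
        generalize 1 - (p.1 + p.2) / 2 = x
        generalize 2 * (m : ℝ) + 1 = d
        ring

theorem le_integral_sliceDensity (m : ℕ) {c : ℝ} (hc : c ≤ 1 / 4)
    (hmc : 4 * m * c ^ 2 ≤ 1) :
    (1 - 4 * m * c ^ 2) ^ 2 * (1 - (2 / 3) ^ (2 * m + 1)) ^ 2 *
        (∫ p in Icc 0 c ×ˢ Icc 0 c, (1 - (p.1 + p.2) / 2) ^ (4 * m + 2)) / (2 * m + 1) ^ 2 ≤
      ∫ p, sliceDensity m p := by
  have hq : (0 : ℝ) ≤ 1 - (2 / 3) ^ (2 * m + 1) :=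
    sub_nonneg.2 (pow_le_one₀ (by norm_num) (by norm_num))
  have hpt : ∀ p, (Icc 0 c ×ˢ Icc 0 c).indicator (fun p : ℝ × ℝ =>
      ((1 - 4 * m * c ^ 2) * (1 - (2 / 3) ^ (2 * m + 1)) * (1 - (p.1 + p.2) / 2) ^ (2 * m + 1)
        / (2 * m + 1)) ^ 2) p ≤ sliceDensity m p := by
    rintro ⟨u, v⟩
    by_cases hbox : (u, v) ∈ Icc 0 c ×ˢ Icc 0 c
    · rw [indicator_of_mem hbox]
      obtain ⟨⟨hu, huc⟩, hv, hvc⟩ := hbox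
      rw [sliceDensity, indicator_of_mem (show (u, v) ∈ Ici 0 ×ˢ Ici 0 from ⟨hu, hv⟩)]
      have hmt : m * (u + v) ^ 2 ≤ 4 * m * c ^ 2 := by
        have : (u + v) ^ 2 ≤ (2 * c) ^ 2 := pow_le_pow_left₀ (by positivity) (by linarith) 2
        nlinarith [(Nat.cast_nonneg m : (0 : ℝ) ≤ m)]
      have hs : 0 ≤ 1 - (u + v) / 2 := by linarith
      refine pow_le_pow_left₀ (by positivity) (le_trans ?_
        (le_sliceIntegral m hu hv (by linarith) (by linarith))) 2
      gcongr
    · rw [indicator_of_notMem hbox]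
      exact sliceDensity_nonneg m _
  calc _ = ∫ p, (Icc 0 c ×ˢ Icc 0 c).indicator (fun p : ℝ × ℝ =>
        ((1 - 4 * m * c ^ 2) * (1 - (2 / 3) ^ (2 * m + 1)) * (1 - (p.1 + p.2) / 2) ^ (2 * m + 1)
          / (2 * m + 1)) ^ 2) p := by
        rw [integral_indicator (measurableSet_Icc.prod measurableSet_Icc), ← integral_const_mul,
          ← integral_div]
        congr with p
        generalize 1 - (p.1 + p.2) / 2 = x
        generalize 2 * (m : ℝ) + 1 = d
        ring
    _ ≤ ∫ p, sliceDensity m p :=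
        integral_mono_of_nonneg (ae_of_all _ fun _ => indicator_nonneg (fun _ _ => sq_nonneg _) _)
          (integrable_sliceDensity m) (ae_of_all _ hpt)

theorem tendsto_one_sub_pow_of_tendsto_mul_atTop {c : ℕ → ℝ}
    (hc : ∀ᶠ m in atTop, 0 ≤ c m ∧ c m ≤ 1) (h : Tendsto (fun m => m * c m) atTop atTop) :
    Tendsto (fun m => (1 - c m) ^ m) atTop (𝓝 0) := by
  have hexp : Tendsto (fun m => Real.exp (-(m * c m))) atTop (𝓝 0) :=
    Real.tendsto_exp_atBot.comp (tendsto_neg_atTop_atBot.comp h)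
  refine tendsto_of_tendsto_of_tendsto_of_le_of_le' tendsto_const_nhds hexp ?_ ?_
  · filter_upwards [hc] with m hm using pow_nonneg (by linarith) m
  · filter_upwards [hc] with m hm
    rw [← mul_neg, Real.exp_nat_mul]
    exact pow_le_pow_left₀ (by linarith) (by linarith [Real.add_one_le_exp (-c m)]) m

theorem tendsto_ratio_quartic :
    Tendsto (fun m : ℕ => 64 * (m : ℝ) ^ 4 / ((2 * m + 1) ^ 2 * ((4 * m + 3) * (4 * m + 4))))
      atTop (𝓝 1) := by
  have hcont : ContinuousAt (fun t : ℝ => 64 / ((2 + t) ^ 2 * ((4 + 3 * t) * (4 + 4 * t)))) 0 :=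
    continuousAt_const.div (by fun_prop) (by norm_num)
  have hlim := hcont.tendsto.comp tendsto_one_div_atTop_nhds_zero_nat
  norm_num at hlim
  refine hlim.congr' ?_
  filter_upwards [eventually_ge_atTop 1] with m hm
  have : (m : ℝ) ≠ 0 := by positivity
  simp only [Function.comp_apply]
  field_simp

theorem tendsto_integral_square_one_sub_half_add_pow {c : ℕ → ℝ}
    (hc : ∀ᶠ m in atTop, 0 ≤ c m ∧ c m ≤ 1) (h : Tendsto (fun m => m * c m) atTop atTop) :
    Tendsto (fun m : ℕ => 16 * (m : ℝ) ^ 4 *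
      ((∫ p in Icc 0 (c m) ×ˢ Icc 0 (c m), (1 - (p.1 + p.2) / 2) ^ (4 * m + 2)) /
        (2 * m + 1) ^ 2))
      atTop (𝓝 1) := by
  have hpow : ∀ {b : ℕ → ℝ}, (∀ᶠ m in atTop, 0 ≤ b m ∧ b m ≤ 1) →
      Tendsto (fun m => m * b m) atTop atTop →
      Tendsto (fun m => (1 - b m) ^ (4 * m + 4)) atTop (𝓝 0) := by
    intro b hb hmb
    refine tendsto_of_tendsto_of_tendsto_of_le_of_le' tendsto_const_nhds
      (tendsto_one_sub_pow_of_tendsto_mul_atTop hb hmb) ?_ ?_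
    · filter_upwards [hb] with m hm using pow_nonneg (by linarith) _
    · filter_upwards [hb] with m hm using
        pow_le_pow_of_le_one (by linarith) (by linarith) (by omega)
  have hhalf := hpow (b := fun m => c m / 2)
    (by filter_upwards [hc] with m hm using ⟨by linarith, by linarith⟩)
    (by simpa only [mul_div_assoc'] using h.atTop_div_const two_pos)
  have hlim := tendsto_ratio_quartic.mul
    (((tendsto_const_nhds (x := (1 : ℝ))).sub (hhalf.const_mul 2)).add (hpow hc h))
  norm_num at hlim
  refine hlim.congr' ?_
  filter_upwards [hc] with m hm
  rw [integral_square_one_sub_half_add_pow _ hm.1]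
  push_cast
  field_simp
  ring

theorem exists_tendsto_mul_atTop_and_mul_sq_tendsto_zero :
    ∃ c : ℕ → ℝ, (∀ m, 0 ≤ c m) ∧ Tendsto c atTop (𝓝 0) ∧
      Tendsto (fun m => m * c m) atTop atTop ∧ Tendsto (fun m => m * c m ^ 2) atTop (𝓝 0) := by
  refine ⟨fun m => (m : ℝ) ^ (-(3 / 5) : ℝ), fun m => by positivity,
    (tendsto_rpow_neg_atTop (by norm_num)).comp tendsto_natCast_atTop_atTop, ?_, ?_⟩
  · refine ((tendsto_rpow_atTop (by norm_num : (0 : ℝ) < 2 / 5)).comp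
      tendsto_natCast_atTop_atTop).congr' ?_
    filter_upwards [eventually_gt_atTop 0] with m hm
    have hm : (0 : ℝ) < m := by exact_mod_cast hm
    simp only [Function.comp_apply]
    rw [show (2 / 5 : ℝ) = 1 + -(3 / 5) by norm_num, Real.rpow_add hm, Real.rpow_one]
  · refine ((tendsto_rpow_neg_atTop (by norm_num : (0 : ℝ) < 1 / 5)).comp
      tendsto_natCast_atTop_atTop).congr' ?_
    filter_upwards [eventually_gt_atTop 0] with m hm
    have hm : (0 : ℝ) < m := by exact_mod_cast hm
    simp only [Function.comp_apply]
    rw [show -(1 / 5 : ℝ) = 1 + (-(3 / 5) + -(3 / 5)) by norm_num, Real.rpow_add hm,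
      Real.rpow_add hm, Real.rpow_one, sq]

theorem tendsto_lower_bound {c : ℕ → ℝ} (hc0 : ∀ m, 0 ≤ c m)
    (hc : Tendsto c atTop (𝓝 0))
    (hmc : Tendsto (fun m => m * c m) atTop atTop)
    (hmc2 : Tendsto (fun m => m * c m ^ 2) atTop (𝓝 0)) :
    Tendsto (fun m : ℕ => 16 * (m : ℝ) ^ 4 *
      ((1 - 4 * m * c m ^ 2) ^ 2 * (1 - (2 / 3) ^ (2 * m + 1)) ^ 2 *
        (∫ p in Icc 0 (c m) ×ˢ Icc 0 (c m), (1 - (p.1 + p.2) / 2) ^ (4 * m + 2)) /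
          (2 * m + 1) ^ 2)) atTop (𝓝 1) := by
  have hq : Tendsto (fun m : ℕ => (2 / 3 : ℝ) ^ (2 * m + 1)) atTop (𝓝 0) :=
    (tendsto_pow_atTop_nhds_zero_of_lt_one (by norm_num) (by norm_num)).comp
      (tendsto_atTop_mono (fun m => (by omega : m ≤ 2 * m + 1)) tendsto_id)
  have hbox := tendsto_integral_square_one_sub_half_add_pow
    (by filter_upwards [hc.eventually_le_const zero_lt_one] with m hm using ⟨hc0 m, hm⟩) hmc
  have hlim := ((((tendsto_const_nhds (x := (1 : ℝ))).sub (hmc2.const_mul 4)).pow 2).mul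
    (((tendsto_const_nhds (x := (1 : ℝ))).sub hq).pow 2)).mul hbox
  rw [show ((1 - 4 * 0) ^ 2 * (1 - 0) ^ 2 * 1 : ℝ) = 1 by norm_num] at hlim
  refine hlim.congr fun m => ?_
  ring

theorem stmt_16 :
    Filter.Tendsto
      (fun m : ℕ => 16 * (m : ℝ) ^ 4 *
        ∫ a in {a : Fin 4 → ℝ | (∀ i, 0 ≤ a i) ∧
            2 * a 0 + a 2 + a 3 < 1 ∧ 2 * a 1 + a 2 + a 3 < 1},
          ((a 0 + a 2) ^ m * (a 0 + a 3) ^ m +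
              (1 - a 0 - a 2) ^ m * (1 - a 0 - a 3) ^ m) *
            ((a 1 + a 2) ^ m * (a 1 + a 3) ^ m +
              (1 - a 1 - a 2) ^ m * (1 - a 1 - a 3) ^ m))
      Filter.atTop (nhds 1) := by
  show Tendsto (fun m : ℕ => 16 * (m : ℝ) ^ 4 *
    ∫ a in region, slicePoly m (a 2) (a 3) (a 0) * slicePoly m (a 2) (a 3) (a 1)) atTop (𝓝 1)
  simp_rw [integral_region_eq_integral_sliceDensity]
  obtain ⟨c, hc0, hc, hmc, hmc2⟩ := exists_tendsto_mul_atTop_and_mul_sq_tendsto_zero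
  have hupper := tendsto_integral_square_one_sub_half_add_pow (c := fun _ => 1)
    (Eventually.of_forall fun _ => ⟨zero_le_one, le_rfl⟩)
    (by simpa using tendsto_natCast_atTop_atTop)
  refine tendsto_of_tendsto_of_tendsto_of_le_of_le' (tendsto_lower_bound hc0 hc hmc hmc2) hupper
    ?_ (Eventually.of_forall fun m => by gcongr; exact integral_sliceDensity_le m)
  filter_upwards [hc.eventually_le_const (by norm_num : (0 : ℝ) < 1 / 4),
    (hmc2.const_mul 4).eventually_le_const (by norm_num : (4 : ℝ) * 0 < 1)] with m hc_le hmc_le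
  gcongr
  exact le_integral_sliceDensity m hc_le (by linarith)
end

section
/- For real t1, t2, t3, t4 with |t_i| < q^{-1/2}/2, the sum over all 4-tuples of monic polynomials (A,B,C,D) in F_q[t] with AC = BD of t1^{deg A} t2^{deg B} t3^{deg C} t4^{deg D} / q^{(deg A + deg B + deg C + deg D)/2} equals sum over nonnegative integers a1,a2,a3,a4 of t1^{a1+a3} t2^{a1+a4} t3^{a2+a4} t4^{a2+a3} minus q^{-1} times sum over nonnegative a1,a2,a3,a4 of t1^{a1+a3+1} t2^{a1+a4+1} t3^{a2+a4+1} t4^{a2+a3+1}. -/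
/-!
Every quadruple of monic polynomials with `A * C = B * D` factors uniquely as
`A = G * R`, `B = G * S`, `C = H * S`, `D = H * R` with `G, H, R, S` monic and `R, S` coprime.
With `xᵢ = tᵢ / √q` the sum therefore splits as `M(x₁x₂) · M(x₃x₄) · P(x₁x₄, x₂x₃)`, where
`M(x) = ∑ x ^ deg = 1 / (1 - q x)` because there are `q ^ n` monic polynomials of degree `n`, and
`P(x, y)` is the sum of `x ^ deg R * y ^ deg S` over coprime monic pairs. Pulling the gcd out of
an arbitrary pair of monic polynomials gives `M(x y) · P(x, y) = M(x) · M(y)`, so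
`P(x, y) = (1 - q x y) / ((1 - q x)(1 - q y))`. The right-hand side of the theorem expands the same
product `(1 - t₁t₂t₃t₄ / q) / ((1 - t₁t₂)(1 - t₃t₄)(1 - t₁t₄)(1 - t₂t₃))`.
-/

open Polynomial

theorem norm_natCast_mul_lt_one {𝕜 : Type*} [NormedField 𝕜] {c : ℕ} {x : 𝕜}
    (hx : c * ‖x‖ < 1) : ‖(c : 𝕜) * x‖ < 1 := by
  grw [norm_mul, Nat.norm_cast_le, norm_one, mul_one]
  exact hx

theorem HasSum.mul_of_summable_norm {ι κ R : Type*} [NormedRing R] [CompleteSpace R]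
    {f : ι → R} {g : κ → R} {s t : R} (hf : HasSum f s) (hg : HasSum g t)
    (hf' : Summable fun i => ‖f i‖) (hg' : Summable fun k => ‖g k‖) :
    HasSum (fun x : ι × κ => f x.1 * g x.2) (s * t) :=
  hf.mul hg (summable_mul_of_summable_norm hf' hg')

section FiberSums

variable {α : Type*} (d : α → ℕ) [∀ n, Finite {a // d a = n}] {c : ℕ}

theorem hasSum_pow_fiber {R : Type*} [CommSemiring R] [TopologicalSpace R]
    (hcard : ∀ n, Nat.card {a // d a = n} = c ^ n) (y : R) (n : ℕ) :
    HasSum (fun a : {a // d a = n} => y ^ d a) ((c * y) ^ n) := by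
  have := Fintype.ofFinite {a // d a = n}
  have hsum : ∑ a : {a // d a = n}, y ^ d a = (c * y) ^ n := by
    simp only [Finset.sum_congr rfl fun (a : {a // d a = n}) _ => congrArg (y ^ ·) a.2,
      Finset.sum_const, Finset.card_univ, ← Nat.card_eq_fintype_card, hcard, nsmul_eq_mul,
      Nat.cast_pow, mul_pow]
  exact hsum ▸ hasSum_fintype _

variable {𝕜 : Type*} [NormedField 𝕜]

theorem summable_norm_pow_of_card_fiber (hcard : ∀ n, Nat.card {a // d a = n} = c ^ n)
    {x : 𝕜} (hx : c * ‖x‖ < 1) : Summable fun a => ‖x ^ d a‖ := by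
  simp only [norm_pow]
  rw [← (Equiv.sigmaFiberEquiv d).summable_iff]
  refine (summable_sigma_of_nonneg fun _ => pow_nonneg (norm_nonneg x) _).2
    ⟨fun n => (hasSum_pow_fiber d hcard _ n).summable, ?_⟩
  simpa only [Function.comp_def, Equiv.sigmaFiberEquiv_apply,
    fun n => (hasSum_pow_fiber d hcard ‖x‖ n).tsum_eq]
    using summable_geometric_of_lt_one (by positivity) hx

theorem hasSum_pow_of_card_fiber [CompleteSpace 𝕜]
    (hcard : ∀ n, Nat.card {a // d a = n} = c ^ n) {x : 𝕜} (hx : c * ‖x‖ < 1) :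
    HasSum (fun a => x ^ d a) (1 - c * x)⁻¹ := by
  rw [← (Equiv.sigmaFiberEquiv d).hasSum_iff]
  exact (hasSum_geometric_of_norm_lt_one (norm_natCast_mul_lt_one hx)).sigma_of_hasSum
    (hasSum_pow_fiber d hcard x)
    ((Equiv.sigmaFiberEquiv d).summable_iff.2 (summable_norm_pow_of_card_fiber d hcard hx).of_norm)

end FiberSums

section FourCycle

variable {𝕜 : Type*} [NormedField 𝕜] [CompleteSpace 𝕜]

theorem hasSum_geometric_prod_four {a b c d : 𝕜}
    (ha : ‖a‖ < 1) (hb : ‖b‖ < 1) (hc : ‖c‖ < 1) (hd : ‖d‖ < 1) :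
    HasSum (fun n : ℕ × ℕ × ℕ × ℕ => a ^ n.1 * (b ^ n.2.1 * (c ^ n.2.2.1 * d ^ n.2.2.2)))
      ((1 - a)⁻¹ * ((1 - b)⁻¹ * ((1 - c)⁻¹ * (1 - d)⁻¹))) := by
  have geom {r : 𝕜} (hr : ‖r‖ < 1) := hasSum_geometric_of_norm_lt_one hr
  have norm {r : 𝕜} (hr : ‖r‖ < 1) := summable_norm_geometric_of_norm_lt_one hr
  have hcd := (geom hc).mul_of_summable_norm (geom hd) (norm hc) (norm hd)
  have hcd' := (norm hc).mul_norm (norm hd)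
  have hbcd := (geom hb).mul_of_summable_norm hcd (norm hb) hcd'
  have hbcd' := (norm hb).mul_norm hcd'
  -- Elaborated against the goal, this would first unify `f x.1 * g x.2` with the goal's
  -- summand, which times out; elaborated on its own it matches the goal immediately.
  have habcd := (geom ha).mul_of_summable_norm hbcd (norm ha) hbcd'
  exact habcd

variable {t₁ t₂ t₃ t₄ : 𝕜}

-- `a` puts an exponent on each edge `12, 34, 14, 23` of the cycle `1 - 2 - 3 - 4 - 1`,
-- and `tᵢ` is raised to the sum of the exponents on the two edges at `i`.
theorem hasSum_fourCycle (h₁₂ : ‖t₁ * t₂‖ < 1) (h₃₄ : ‖t₃ * t₄‖ < 1) (h₁₄ : ‖t₁ * t₄‖ < 1)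
    (h₂₃ : ‖t₂ * t₃‖ < 1) :
    HasSum (fun a : ℕ × ℕ × ℕ × ℕ => t₁ ^ (a.1 + a.2.2.1) * t₂ ^ (a.1 + a.2.2.2) *
        t₃ ^ (a.2.1 + a.2.2.2) * t₄ ^ (a.2.1 + a.2.2.1))
      ((1 - t₁ * t₂)⁻¹ * ((1 - t₃ * t₄)⁻¹ * ((1 - t₁ * t₄)⁻¹ * (1 - t₂ * t₃)⁻¹))) :=
  (hasSum_geometric_prod_four h₁₂ h₃₄ h₁₄ h₂₃).congr_fun fun a => by ring

theorem hasSum_fourCycle_succ (h₁₂ : ‖t₁ * t₂‖ < 1) (h₃₄ : ‖t₃ * t₄‖ < 1)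
    (h₁₄ : ‖t₁ * t₄‖ < 1) (h₂₃ : ‖t₂ * t₃‖ < 1) :
    HasSum (fun a : ℕ × ℕ × ℕ × ℕ => t₁ ^ (a.1 + a.2.2.1 + 1) * t₂ ^ (a.1 + a.2.2.2 + 1) *
        t₃ ^ (a.2.1 + a.2.2.2 + 1) * t₄ ^ (a.2.1 + a.2.2.1 + 1))
      (t₁ * t₂ * t₃ * t₄ *
        ((1 - t₁ * t₂)⁻¹ * ((1 - t₃ * t₄)⁻¹ * ((1 - t₁ * t₄)⁻¹ * (1 - t₂ * t₃)⁻¹)))) :=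
  ((hasSum_fourCycle h₁₂ h₃₄ h₁₄ h₂₃).mul_left (t₁ * t₂ * t₃ * t₄)).congr_fun
    fun a => by ring

end FourCycle

abbrev MonicPolynomial (R : Type*) [Semiring R] := {p : R[X] // p.Monic}

section Counting

variable (R : Type*) [Semiring R] [Nontrivial R]

noncomputable def monicNatDegreeEquiv (n : ℕ) :
    {p : MonicPolynomial R // p.1.natDegree = n} ≃ (Fin n → R) :=
  (Equiv.subtypeSubtypeEquivSubtypeInter _ _).trans
    ((monicEquivDegreeLT n).trans (degreeLTEquiv R n).toEquiv)

theorem card_monic_natDegree_eq (n : ℕ) :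
    Nat.card {p : MonicPolynomial R // p.1.natDegree = n} = Nat.card R ^ n := by
  rw [Nat.card_congr (monicNatDegreeEquiv R n), Nat.card_fun, Nat.card_fin]

variable [Finite R]

instance (n : ℕ) : Finite {p : MonicPolynomial R // p.1.natDegree = n} :=
  .of_equiv _ (monicNatDegreeEquiv R n).symm

variable {𝕜 : Type*} [NormedField 𝕜] {x : 𝕜}

theorem summable_norm_pow_natDegree_monic (hx : Nat.card R * ‖x‖ < 1) :
    Summable fun p : MonicPolynomial R => ‖x ^ p.1.natDegree‖ :=
  summable_norm_pow_of_card_fiber _ (card_monic_natDegree_eq R) hx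

theorem hasSum_pow_natDegree_monic [CompleteSpace 𝕜] (hx : Nat.card R * ‖x‖ < 1) :
    HasSum (fun p : MonicPolynomial R => x ^ p.1.natDegree) (1 - Nat.card R * x)⁻¹ :=
  hasSum_pow_of_card_fiber _ (card_monic_natDegree_eq R) hx

end Counting

theorem associated_gcd_mul_mul_of_isCoprime {α : Type*} [CommRing α] [IsDomain α] [GCDMonoid α]
    (a : α) {b c : α} (h : IsCoprime b c) : Associated (gcd (a * b) (a * c)) a :=
  (gcd_mul_left' a b c).trans
    (associated_mul_unit_right a _ (gcd_isUnit_iff_isRelPrime.mpr h.isRelPrime)).symm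

section Factorization

variable {F : Type*} [Field F]

theorem Polynomial.Monic.eq_of_mul_eq_mul_of_isCoprime {G₁ G₂ R₁ R₂ S₁ S₂ : F[X]}
    (hG₁ : G₁.Monic) (hG₂ : G₂.Monic) (h₁ : IsCoprime R₁ S₁) (h₂ : IsCoprime R₂ S₂)
    (hR : G₁ * R₁ = G₂ * R₂) (hS : G₁ * S₁ = G₂ * S₂) : G₁ = G₂ := by
  classical
  refine eq_of_monic_of_associated hG₁ hG₂ ?_
  have h := (associated_gcd_mul_mul_of_isCoprime G₁ h₁).symm
  rw [hR, hS] at h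
  exact h.trans (associated_gcd_mul_mul_of_isCoprime G₂ h₂)

theorem Polynomial.Monic.exists_mul_isCoprime {A B : F[X]} (hA : A.Monic) (hB : B.Monic) :
    ∃ G R S : F[X], G.Monic ∧ R.Monic ∧ S.Monic ∧ IsCoprime R S ∧ G * R = A ∧ G * S = B := by
  classical
  obtain ⟨R, hR⟩ := gcd_dvd_left A B
  obtain ⟨S, hS⟩ := gcd_dvd_right A B
  have hG0 : gcd A B ≠ 0 := gcd_ne_zero_of_left hA.ne_zero
  have hG : (gcd A B).Monic := normalize_gcd A B ▸ monic_normalize hG0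
  refine ⟨gcd A B, R, S, hG, hG.of_mul_monic_left (hR ▸ hA), hG.of_mul_monic_left (hS ▸ hB),
    (gcd_isUnit_iff R S).mp ?_, hR.symm, hS.symm⟩
  have h := gcd_mul_left' (gcd A B) R S
  rw [← hR, ← hS] at h
  exact isUnit_of_associated_mul h.symm hG0

theorem Polynomial.Monic.exists_mul_eq_of_mul_eq_mul {R S C D : F[X]} (hS : S.Monic)
    (hC : C.Monic) (h : IsCoprime R S) (hRC : R * C = S * D) :
    ∃ H : F[X], H.Monic ∧ H * S = C ∧ H * R = D := by
  obtain ⟨H, rfl⟩ := h.symm.dvd_of_dvd_mul_left ⟨D, hRC⟩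
  refine ⟨H, hS.of_mul_monic_left hC, mul_comm H S, mul_left_cancel₀ hS.ne_zero ?_⟩
  rw [← hRC]
  ring

variable (F)

abbrev CoprimeMonicPair :=
  {rs : MonicPolynomial F × MonicPolynomial F // IsCoprime rs.1.1 rs.2.1}

abbrev MonicMulEqQuadruple :=
  {x : F[X] × F[X] × F[X] × F[X] //
    x.1.Monic ∧ x.2.1.Monic ∧ x.2.2.1.Monic ∧ x.2.2.2.Monic ∧ x.1 * x.2.2.1 = x.2.1 * x.2.2.2}

noncomputable def mulCoprimeEquiv :
    MonicPolynomial F × CoprimeMonicPair F ≃ MonicPolynomial F × MonicPolynomial F :=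
  Equiv.ofBijective
    (fun x => (⟨x.1 * x.2.1.1, x.1.2.mul x.2.1.1.2⟩, ⟨x.1 * x.2.1.2, x.1.2.mul x.2.1.2.2⟩))
    (by
      constructor
      · rintro ⟨⟨G₁, hG₁⟩, ⟨⟨R₁, _⟩, ⟨S₁, _⟩⟩, h₁⟩ ⟨⟨G₂, hG₂⟩, ⟨⟨R₂, _⟩, ⟨S₂, _⟩⟩, h₂⟩ h
        simp only [Prod.mk.injEq, Subtype.mk.injEq] at h ⊢
        obtain rfl := hG₁.eq_of_mul_eq_mul_of_isCoprime hG₂ h₁ h₂ h.1 h.2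
        exact ⟨rfl, mul_left_cancel₀ hG₁.ne_zero h.1, mul_left_cancel₀ hG₁.ne_zero h.2⟩
      · rintro ⟨⟨A, hA⟩, ⟨B, hB⟩⟩
        obtain ⟨G, R, S, hG, hR, hS, h, rfl, rfl⟩ := hA.exists_mul_isCoprime hB
        exact ⟨(⟨G, hG⟩, ⟨(⟨R, hR⟩, ⟨S, hS⟩), h⟩), rfl⟩)

noncomputable def monicMulEqQuadrupleEquiv :
    MonicPolynomial F × MonicPolynomial F × CoprimeMonicPair F ≃ MonicMulEqQuadruple F :=
  Equiv.ofBijective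
    (fun x => ⟨(x.1 * x.2.2.1.1, x.1 * x.2.2.1.2, x.2.1 * x.2.2.1.2, x.2.1 * x.2.2.1.1),
      x.1.2.mul x.2.2.1.1.2, x.1.2.mul x.2.2.1.2.2, x.2.1.2.mul x.2.2.1.2.2,
      x.2.1.2.mul x.2.2.1.1.2, by ring⟩)
    (by
      constructor
      · rintro ⟨⟨G₁, hG₁⟩, ⟨H₁, _⟩, ⟨⟨R₁, _⟩, ⟨S₁, hS₁⟩⟩, h₁⟩
          ⟨⟨G₂, hG₂⟩, ⟨H₂, _⟩, ⟨⟨R₂, _⟩, ⟨S₂, _⟩⟩, h₂⟩ h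
        simp only [Prod.mk.injEq, Subtype.mk.injEq] at h ⊢
        obtain rfl := hG₁.eq_of_mul_eq_mul_of_isCoprime hG₂ h₁ h₂ h.1 h.2.1
        obtain rfl := mul_left_cancel₀ hG₁.ne_zero h.1
        obtain rfl := mul_left_cancel₀ hG₁.ne_zero h.2.1
        exact ⟨rfl, mul_right_cancel₀ hS₁.ne_zero h.2.2.1, rfl, rfl⟩
      · rintro ⟨⟨A, B, C, D⟩, hA, hB, hC, -, hABCD⟩
        obtain ⟨G, R, S, hG, hR, hS, h, rfl, rfl⟩ := hA.exists_mul_isCoprime hB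
        obtain ⟨H, hH, rfl, rfl⟩ := hS.exists_mul_eq_of_mul_eq_mul hC h
          (mul_left_cancel₀ hG.ne_zero (by rw [← mul_assoc, hABCD, mul_assoc]))
        exact ⟨(⟨G, hG⟩, ⟨H, hH⟩, ⟨(⟨R, hR⟩, ⟨S, hS⟩), h⟩), rfl⟩)

variable {M : Type*} [CommMonoid M]

theorem pow_natDegree_mulCoprimeEquiv (x y : M) (z : MonicPolynomial F × CoprimeMonicPair F) :
    x ^ (mulCoprimeEquiv F z).1.1.natDegree * y ^ (mulCoprimeEquiv F z).2.1.natDegree =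
      (x * y) ^ z.1.1.natDegree * (x ^ z.2.1.1.1.natDegree * y ^ z.2.1.2.1.natDegree) := by
  obtain ⟨⟨G, hG⟩, ⟨⟨R, hR⟩, ⟨S, hS⟩⟩, -⟩ := z
  change x ^ (G * R).natDegree * y ^ (G * S).natDegree = _
  rw [hG.natDegree_mul hR, hG.natDegree_mul hS, pow_add, pow_add, mul_pow]
  ac_rfl

theorem pow_natDegree_monicMulEqQuadrupleEquiv (x₁ x₂ x₃ x₄ : M)
    (z : MonicPolynomial F × MonicPolynomial F × CoprimeMonicPair F) :
    x₁ ^ (monicMulEqQuadrupleEquiv F z).1.1.natDegree *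
        x₂ ^ (monicMulEqQuadrupleEquiv F z).1.2.1.natDegree *
        x₃ ^ (monicMulEqQuadrupleEquiv F z).1.2.2.1.natDegree *
        x₄ ^ (monicMulEqQuadrupleEquiv F z).1.2.2.2.natDegree =
      (x₁ * x₂) ^ z.1.1.natDegree * ((x₃ * x₄) ^ z.2.1.1.natDegree *
        ((x₁ * x₄) ^ z.2.2.1.1.1.natDegree * (x₂ * x₃) ^ z.2.2.1.2.1.natDegree)) := by
  obtain ⟨⟨G, hG⟩, ⟨H, hH⟩, ⟨⟨R, hR⟩, ⟨S, hS⟩⟩, -⟩ := z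
  change x₁ ^ (G * R).natDegree * x₂ ^ (G * S).natDegree * x₃ ^ (H * S).natDegree *
    x₄ ^ (H * R).natDegree = _
  simp only [hG.natDegree_mul hR, hG.natDegree_mul hS, hH.natDegree_mul hS,
    hH.natDegree_mul hR, pow_add, mul_pow]
  ac_rfl

end Factorization

section Series

variable {F : Type*} [Field F] [Finite F] {𝕜 : Type*} [NormedField 𝕜]

theorem summable_norm_coprimeMonicPair {x y : 𝕜} (hx : Nat.card F * ‖x‖ < 1)
    (hy : Nat.card F * ‖y‖ < 1) :
    Summable fun rs : CoprimeMonicPair F => ‖x ^ rs.1.1.1.natDegree * y ^ rs.1.2.1.natDegree‖ :=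
  ((summable_norm_pow_natDegree_monic F hx).mul_norm
    (summable_norm_pow_natDegree_monic F hy)).subtype _

variable [CompleteSpace 𝕜]

theorem hasSum_coprimeMonicPair {x y : 𝕜} (hx : Nat.card F * ‖x‖ < 1)
    (hy : Nat.card F * ‖y‖ < 1) :
    HasSum (fun rs : CoprimeMonicPair F => x ^ rs.1.1.1.natDegree * y ^ rs.1.2.1.natDegree)
      ((1 - Nat.card F * (x * y)) * ((1 - Nat.card F * x)⁻¹ * (1 - Nat.card F * y)⁻¹)) := by
  have hq : (1 : ℝ) ≤ Nat.card F := Nat.one_le_cast.2 Nat.card_pos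
  have hxy : Nat.card F * ‖x * y‖ < 1 := by
    have hy1 : ‖y‖ ≤ 1 := by nlinarith [norm_nonneg y]
    grw [norm_mul, hy1, mul_one]
    exact hx
  have hP := summable_norm_coprimeMonicPair hx hy
  have hgcd := (hasSum_pow_natDegree_monic F hxy).mul_of_summable_norm hP.of_norm.hasSum
    (summable_norm_pow_natDegree_monic F hxy) hP
  have hpairs := (hasSum_pow_natDegree_monic F hx).mul_of_summable_norm
    (hasSum_pow_natDegree_monic F hy) (summable_norm_pow_natDegree_monic F hx)
    (summable_norm_pow_natDegree_monic F hy)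
  rw [← (mulCoprimeEquiv F).hasSum_iff] at hpairs
  simp only [Function.comp_def, pow_natDegree_mulCoprimeEquiv] at hpairs
  rw [← hgcd.unique hpairs, mul_inv_cancel_left₀ (isUnit_one_sub_of_norm_lt_one
    (norm_natCast_mul_lt_one hxy)).ne_zero]
  exact hP.of_norm.hasSum

theorem hasSum_monicMulEqQuadruple {x₁ x₂ x₃ x₄ : 𝕜} (h₁₂ : Nat.card F * ‖x₁ * x₂‖ < 1)
    (h₃₄ : Nat.card F * ‖x₃ * x₄‖ < 1) (h₁₄ : Nat.card F * ‖x₁ * x₄‖ < 1)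
    (h₂₃ : Nat.card F * ‖x₂ * x₃‖ < 1) :
    HasSum (fun v : MonicMulEqQuadruple F => x₁ ^ v.1.1.natDegree * x₂ ^ v.1.2.1.natDegree *
        x₃ ^ v.1.2.2.1.natDegree * x₄ ^ v.1.2.2.2.natDegree)
      ((1 - Nat.card F * (x₁ * x₂))⁻¹ * ((1 - Nat.card F * (x₃ * x₄))⁻¹ *
        ((1 - Nat.card F * (x₁ * x₄ * (x₂ * x₃))) *
          ((1 - Nat.card F * (x₁ * x₄))⁻¹ * (1 - Nat.card F * (x₂ * x₃))⁻¹)))) := by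
  have hP := summable_norm_coprimeMonicPair h₁₄ h₂₃
  have hHP := (hasSum_pow_natDegree_monic F h₃₄).mul_of_summable_norm
    (hasSum_coprimeMonicPair h₁₄ h₂₃) (summable_norm_pow_natDegree_monic F h₃₄) hP
  have hHP' := (summable_norm_pow_natDegree_monic F h₃₄).mul_norm hP
  have hGHP := (hasSum_pow_natDegree_monic F h₁₂).mul_of_summable_norm hHP
    (summable_norm_pow_natDegree_monic F h₁₂) hHP'
  rw [← (monicMulEqQuadrupleEquiv F).hasSum_iff]
  simpa only [Function.comp_def, pow_natDegree_monicMulEqQuadrupleEquiv] using hGHP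

theorem tsum_monicMulEqQuadruple_div_sqrt_card {t₁ t₂ t₃ t₄ : ℝ} (h₁₂ : ‖t₁ * t₂‖ < 1)
    (h₃₄ : ‖t₃ * t₄‖ < 1) (h₁₄ : ‖t₁ * t₄‖ < 1) (h₂₃ : ‖t₂ * t₃‖ < 1) :
    ∑' v : MonicMulEqQuadruple F, t₁ ^ v.1.1.natDegree * t₂ ^ v.1.2.1.natDegree *
        t₃ ^ v.1.2.2.1.natDegree * t₄ ^ v.1.2.2.2.natDegree / √(Nat.card F) ^
          (v.1.1.natDegree + v.1.2.1.natDegree + v.1.2.2.1.natDegree + v.1.2.2.2.natDegree) =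
      (1 - t₁ * t₂)⁻¹ * ((1 - t₃ * t₄)⁻¹ *
        ((1 - t₁ * t₂ * t₃ * t₄ / Nat.card F) * ((1 - t₁ * t₄)⁻¹ * (1 - t₂ * t₃)⁻¹))) := by
  set q : ℝ := (Nat.card F : ℝ)
  have hq : 0 < q := Nat.cast_pos.2 Nat.card_pos
  have hscale (a b : ℝ) : q * (a / √q * (b / √q)) = a * b := by
    rw [div_mul_div_comm, Real.mul_self_sqrt hq.le, mul_div_cancel₀ _ hq.ne']
  have hnorm (a b : ℝ) : q * ‖a / √q * (b / √q)‖ = ‖a * b‖ := by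
    rw [← hscale a b, norm_mul q, Real.norm_of_nonneg hq.le]
  have h := hasSum_monicMulEqQuadruple (F := F) (x₁ := t₁ / √q) (x₂ := t₂ / √q)
    (x₃ := t₃ / √q) (x₄ := t₄ / √q) (by rwa [hnorm]) (by rwa [hnorm]) (by rwa [hnorm])
    (by rwa [hnorm])
  refine (tsum_congr fun v => ?_).trans (h.tsum_eq.trans ?_)
  · simp only [div_pow, pow_add]
    ring
  · have hquartic :
        q * (t₁ / √q * (t₄ / √q) * (t₂ / √q * (t₃ / √q))) = t₁ * t₂ * t₃ * t₄ / q := by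
      rw [← mul_assoc, hscale, div_mul_div_comm, Real.mul_self_sqrt hq.le]
      ring
    rw [hscale, hscale, hscale, hscale, hquartic]

end Series

theorem stmt_18 (F : Type*) [Field F] [Fintype F] (t1 t2 t3 t4 : ℝ)
    (h1 : |t1| < (Real.sqrt (Fintype.card F))⁻¹ / 2)
    (h2 : |t2| < (Real.sqrt (Fintype.card F))⁻¹ / 2)
    (h3 : |t3| < (Real.sqrt (Fintype.card F))⁻¹ / 2)
    (h4 : |t4| < (Real.sqrt (Fintype.card F))⁻¹ / 2) :
    ∑' x : {x : Polynomial F × Polynomial F × Polynomial F × Polynomial F //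
        x.1.Monic ∧ x.2.1.Monic ∧ x.2.2.1.Monic ∧ x.2.2.2.Monic ∧
          x.1 * x.2.2.1 = x.2.1 * x.2.2.2},
        t1 ^ x.1.1.natDegree * t2 ^ x.1.2.1.natDegree *
            t3 ^ x.1.2.2.1.natDegree * t4 ^ x.1.2.2.2.natDegree /
          Real.sqrt (Fintype.card F) ^
            (x.1.1.natDegree + x.1.2.1.natDegree + x.1.2.2.1.natDegree + x.1.2.2.2.natDegree)
      = (∑' a : ℕ × ℕ × ℕ × ℕ,
            t1 ^ (a.1 + a.2.2.1) * t2 ^ (a.1 + a.2.2.2) *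
              t3 ^ (a.2.1 + a.2.2.2) * t4 ^ (a.2.1 + a.2.2.1)) -
          (Fintype.card F : ℝ)⁻¹ *
            ∑' a : ℕ × ℕ × ℕ × ℕ,
              t1 ^ (a.1 + a.2.2.1 + 1) * t2 ^ (a.1 + a.2.2.2 + 1) *
                t3 ^ (a.2.1 + a.2.2.2 + 1) * t4 ^ (a.2.1 + a.2.2.1 + 1) := by
  rw [← Nat.card_eq_fintype_card] at h1 h2 h3 h4 ⊢
  have hlt {t : ℝ} (ht : |t| < (√(Nat.card F : ℝ))⁻¹ / 2) : ‖t‖ < 1 := by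
    have : (√(Nat.card F : ℝ))⁻¹ ≤ 1 :=
      inv_le_one_of_one_le₀ (Real.one_le_sqrt.2 (Nat.one_le_cast.2 Nat.card_pos))
    rw [Real.norm_eq_abs]
    linarith
  have hpair {a b : ℝ} (ha : |a| < (√(Nat.card F : ℝ))⁻¹ / 2)
      (hb : |b| < (√(Nat.card F : ℝ))⁻¹ / 2) : ‖a * b‖ < 1 := by
    rw [norm_mul]
    exact mul_lt_one_of_nonneg_of_lt_one_left (norm_nonneg a) (hlt ha) (hlt hb).le
  rw [tsum_monicMulEqQuadruple_div_sqrt_card (hpair h1 h2) (hpair h3 h4) (hpair h1 h4)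
      (hpair h2 h3),
    (hasSum_fourCycle (hpair h1 h2) (hpair h3 h4) (hpair h1 h4) (hpair h2 h3)).tsum_eq,
    (hasSum_fourCycle_succ (hpair h1 h2) (hpair h3 h4) (hpair h1 h4) (hpair h2 h3)).tsum_eq]
  ring
end
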